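/- arXiv:0711.4133 — 9 statements merged into one kernel-verified Lean document; each statement's English description precedes it below -/
import Mathlib

section
/- The recursion f_{k→m} = 1 - f_{k→m-1}σ_{m-1} is equivalent to the alternative recursion f_{k→m} = f_{k+1→m} + (-1)^{m-k} σ_k σ_{k+1} ··· σ_{m-1}; i.e. the elements f_{k→m} defined by the first recursion also satisfy the second. -/
/-- The ascending product `σ_a σ_{a+1} ⋯ σ_{b-1}` (equal to `1` when `b ≤ a`). -/
def braidRiseProd {A : Type*} [Ring A] (σ : ℕ → A) (a b : ℕ) : A :=
  ((List.range (b - a)).map (fun i => σ (a + i))).prod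

/-- The elements `f_{k→m}` of the group algebra of the braid group, defined by
`f_{k→k} = 1` and `f_{k→m} = 1 - f_{k→m-1} σ_{m-1}`. -/
def braidF {A : Type*} [Ring A] (σ : ℕ → A) (k : ℕ) : ℕ → A
  | 0 => 1
  | m + 1 => if m + 1 ≤ k then 1 else 1 - braidF σ k m * σ m

lemma braidF_self {A : Type*} [Ring A] (σ : ℕ → A) (k : ℕ) : braidF σ k k = 1 := by
  cases k with
  | zero => rfl
  | succ j => simp [braidF]

lemma braidF_succ_of_le {A : Type*} [Ring A] (σ : ℕ → A) {k m : ℕ} (h : k ≤ m) :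
    braidF σ k (m + 1) = 1 - braidF σ k m * σ m := by
  simp only [braidF, if_neg (by omega : ¬ m + 1 ≤ k)]

lemma braidRiseProd_mul {A : Type*} [Ring A] (σ : ℕ → A) {a b : ℕ} (h : a ≤ b) :
    braidRiseProd σ a b * σ b = braidRiseProd σ a (b + 1) := by
  unfold braidRiseProd
  rw [show b + 1 - a = (b - a) + 1 by omega, List.range_succ, List.map_append,
    List.prod_append]
  simp [show a + (b - a) = b by omega]

lemma braidRiseProd_single {A : Type*} [Ring A] (σ : ℕ → A) (a : ℕ) :
    braidRiseProd σ a (a + 1) = σ a := by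
  simp [braidRiseProd, List.range_succ]

/-- In the group algebra of the braid group, the elements `f_{k→m}` defined by the
recursion `f_{k→m} = 1 - f_{k→m-1} σ_{m-1}` also satisfy the alternative recursion
`f_{k→m} = f_{k+1→m} + (-1)^{m-k} σ_k σ_{k+1} ⋯ σ_{m-1}`. -/
theorem braidF_alt_recursion {A : Type*} [Ring A] (σ : ℕ → A)
    (hbraid : ∀ i, σ i * σ (i + 1) * σ i = σ (i + 1) * σ i * σ (i + 1))
    (hcomm : ∀ i j, i + 2 ≤ j → σ i * σ j = σ j * σ i)
    (k m : ℕ) (hkm : k < m) :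
    braidF σ k m = braidF σ (k + 1) m + (-1 : A) ^ (m - k) * braidRiseProd σ k m := by
  induction m, hkm using Nat.le_induction with
  | base =>
      rw [braidF_succ_of_le σ le_rfl, braidF_self, braidF_self, braidRiseProd_single,
        show k + 1 - k = 1 by omega, pow_one]
      noncomm_ring
  | succ m hm ih =>
      have hkm : k ≤ m := le_of_lt hm
      rw [braidF_succ_of_le σ hkm, braidF_succ_of_le σ hm, ih]
      rw [show m + 1 - k = (m - k) + 1 by omega, pow_succ]
      rw [← braidRiseProd_mul σ hkm]
      simp only [Nat.succ_eq_add_one, Nat.add_comm 1 k]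
      noncomm_ring
end

section
/- The recursion f̄_{k→m} = 1 - f̄_{k+1→m}σ_k is equivalent to the alternative recursion f̄_{k→m} = f̄_{k→m-1} + (-1)^{m-k} σ_{m-1} ··· σ_{k+1} σ_k; i.e. the elements f̄_{k→m} defined by the first recursion also satisfy the second. -/
/-- The descending product `σ_{b-1} σ_{b-2} ⋯ σ_a` (equal to `1` when `b ≤ a`). -/
def braidFallProd {A : Type*} [Ring A] (σ : ℕ → A) (a b : ℕ) : A :=
  ((List.range (b - a)).map (fun i => σ (b - 1 - i))).prod

/-- The elements `f̄_{k→m}` of the group algebra of the braid group, defined by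
`f̄_{k→k} = 1` and `f̄_{k→m} = 1 - f̄_{k+1→m} σ_k`. -/
def braidFbar {A : Type*} [Ring A] (σ : ℕ → A) (m : ℕ) (k : ℕ) : A :=
  if h : m ≤ k then 1 else 1 - braidFbar σ m (k + 1) * σ k
termination_by m - k
decreasing_by omega

lemma braidFallProd_peel {A : Type*} [Ring A] (σ : ℕ → A) (k m : ℕ) (hkm : k ≤ m) :
    braidFallProd σ k (m + 1) = braidFallProd σ (k + 1) (m + 1) * σ k := by
  unfold braidFallProd
  have h1 : m + 1 - k = (m - k) + 1 := by omega
  have h2 : m + 1 - (k + 1) = m - k := by omega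
  rw [h1, h2, List.range_succ, List.map_append, List.prod_append]
  simp only [List.map_cons, List.map_nil, List.prod_cons, List.prod_nil, mul_one]
  congr 2
  omega

/-- In the group algebra of the braid group, the elements `f̄_{k→m}` defined by the
recursion `f̄_{k→m} = 1 - f̄_{k+1→m} σ_k` also satisfy the alternative recursion
`f̄_{k→m} = f̄_{k→m-1} + (-1)^{m-k} σ_{m-1} ⋯ σ_{k+1} σ_k` (stated here with `m+1`
in place of `m`). -/
theorem braidFbar_alt_recursion {A : Type*} [Ring A] (σ : ℕ → A)
    (hbraid : ∀ i, σ i * σ (i + 1) * σ i = σ (i + 1) * σ i * σ (i + 1))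
    (hcomm : ∀ i j, i + 2 ≤ j → σ i * σ j = σ j * σ i)
    (k m : ℕ) (hkm : k ≤ m) :
    braidFbar σ (m + 1) k =
      braidFbar σ m k + (-1 : A) ^ (m + 1 - k) * braidFallProd σ k (m + 1) := by
  obtain ⟨n, rfl⟩ : ∃ n, m = k + n := ⟨m - k, by omega⟩
  clear hkm
  induction n generalizing k with
  | zero =>
    simp only [Nat.add_zero]
    rw [braidFbar, braidFbar, braidFbar]
    simp only [le_refl, dif_pos, dif_neg (by omega : ¬ k + 1 ≤ k)]
    rw [braidFbar, dif_pos le_rfl]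
    unfold braidFallProd
    simp [show k + 1 - k = 1 from by omega, show List.range 1 = [0] from rfl]
    noncomm_ring
  | succ n ih =>
    have hk1 : k + (n + 1) = k + 1 + n := by omega
    rw [hk1]
    rw [braidFbar, dif_neg (by omega : ¬ k + 1 + n + 1 ≤ k)]
    conv_rhs => rw [braidFbar, dif_neg (by omega : ¬ k + 1 + n ≤ k)]
    rw [ih (k + 1), braidFallProd_peel σ k (k + 1 + n) (by omega)]
    rw [show k + 1 + n + 1 - (k + 1) = n + 1 from by omega,
        show k + 1 + n + 1 - k = n + 2 from by omega,
        show (-1 : A) ^ (n + 2) = -(-1 : A) ^ (n + 1) from by rw [pow_succ, mul_neg_one]]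
    noncomm_ring
end

section
/- The two recursive definitions of the quantum antisymmetrizer agree: the element A_{1→n} defined by A_{1→1}=1 and A_{1→n} = f_{1→n}·A_{1→n-1} equals the element defined by A_{1→n} = f̄_{1→n}·A_{2→n}, where A_{2→n} is the shifted antisymmetrizer (built from σ_2,...,σ_{n-1}). -/
/-- The quantum antisymmetrizers `A_{k→n}`, defined by `A_{k→k} = 1` and
`A_{k→n} = f_{k→n} A_{k→n-1}`. -/
def braidAntis {A : Type*} [Ring A] (σ : ℕ → A) (k : ℕ) : ℕ → A
  | 0 => 1
  | n + 1 => if n + 1 ≤ k then 1 else braidF σ k (n + 1) * braidAntis σ k n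

namespace BraidAux

variable {A : Type*} [Ring A] (σ : ℕ → A)

/-- Signed ascending product `(-σ k)(-σ (k+1)) ⋯ (-σ (m-1))`. -/
def nasc (k : ℕ) : ℕ → A
  | 0 => 1
  | m + 1 => if m + 1 ≤ k then 1 else nasc k m * (-(σ m))

lemma braidF_le {k m : ℕ} (h : m ≤ k) : braidF σ k m = 1 := by
  cases m with
  | zero => rfl
  | succ m => simp only [braidF, if_pos h]

lemma braidF_succ {k m : ℕ} (h : ¬ m + 1 ≤ k) :
    braidF σ k (m + 1) = 1 - braidF σ k m * σ m := by
  simp only [braidF, if_neg h]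

lemma braidFbar_le {k m : ℕ} (h : m ≤ k) : braidFbar σ m k = 1 := by
  rw [braidFbar, dif_pos h]

lemma braidFbar_gt {k m : ℕ} (h : ¬ m ≤ k) :
    braidFbar σ m k = 1 - braidFbar σ m (k + 1) * σ k := by
  rw [braidFbar, dif_neg h]

lemma nasc_le {k m : ℕ} (h : m ≤ k) : nasc σ k m = 1 := by
  cases m with
  | zero => rfl
  | succ m => simp only [nasc, if_pos h]

lemma nasc_succ {k m : ℕ} (h : ¬ m + 1 ≤ k) :
    nasc σ k (m + 1) = nasc σ k m * (-(σ m)) := by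
  simp only [nasc, if_neg h]

variable (hbraid : ∀ i, σ i * σ (i + 1) * σ i = σ (i + 1) * σ i * σ (i + 1))
variable (hcomm : ∀ i j, i + 2 ≤ j → σ i * σ j = σ j * σ i)

section
include hcomm

/-- `σ i` commutes with `nasc k m` when `m + 1 ≤ i` (all factors are far below `i`). -/
lemma comm_nasc_high (i k : ℕ) : ∀ m, m + 1 ≤ i → σ i * nasc σ k m = nasc σ k m * σ i := by
  intro m
  induction m with
  | zero => intro _; simp [nasc]
  | succ m ih =>
    intro hm
    by_cases h : m + 1 ≤ k
    · simp [nasc_le σ h]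
    · rw [nasc_succ σ h, ← mul_assoc, ih (by omega), mul_assoc, mul_assoc]
      congr 1
      rw [mul_neg, neg_mul, hcomm m i (by omega)]

/-- `σ i` commutes with `nasc k m` when `i + 2 ≤ k` (all factors are far above `i`). -/
lemma comm_nasc_low (i k : ℕ) (hik : i + 2 ≤ k) :
    ∀ m, σ i * nasc σ k m = nasc σ k m * σ i := by
  intro m
  induction m with
  | zero => simp [nasc]
  | succ m ih =>
    by_cases h : m + 1 ≤ k
    · simp [nasc_le σ h]
    · rw [nasc_succ σ h, ← mul_assoc, ih, mul_assoc, mul_assoc]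
      congr 1
      rw [mul_neg, neg_mul, hcomm i m (by omega)]

/-- `σ i` commutes with `braidF k m` when `i + 2 ≤ k`. -/
lemma comm_braidF (i k : ℕ) (hik : i + 2 ≤ k) :
    ∀ m, σ i * braidF σ k m = braidF σ k m * σ i := by
  intro m
  induction m with
  | zero => simp [braidF]
  | succ m ih =>
    by_cases h : m + 1 ≤ k
    · simp [braidF_le σ h]
    · rw [braidF_succ σ h, mul_sub, sub_mul, mul_one, one_mul, ← mul_assoc, ih,
        mul_assoc, mul_assoc, hcomm i m (by omega)]

/-- `σ i` commutes with `braidFbar m k` when `i + 2 ≤ k`. -/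
lemma comm_braidFbar (i m : ℕ) :
    ∀ d k, m ≤ k + d → i + 2 ≤ k → σ i * braidFbar σ m k = braidFbar σ m k * σ i := by
  intro d
  induction d with
  | zero => intro k hk _; rw [braidFbar_le σ (by omega : m ≤ k), mul_one, one_mul]
  | succ d ih =>
    intro k hk hik
    by_cases h : m ≤ k
    · simp [braidFbar_le σ h]
    · rw [braidFbar_gt σ h, mul_sub, sub_mul, mul_one, one_mul, ← mul_assoc,
        ih (k + 1) (by omega) (by omega), mul_assoc, mul_assoc, hcomm i k (by omega)]

/-- `nasc k m = (-σ k) * nasc (k+1) m` when `k < m`. -/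
lemma nasc_cons (k : ℕ) : ∀ m, k < m → nasc σ k m = -(σ k) * nasc σ (k + 1) m := by
  intro m
  induction m with
  | zero => omega
  | succ m ih =>
    intro hkm
    by_cases h : k < m
    · rw [nasc_succ σ (by omega), ih h, nasc_succ σ (by omega), mul_assoc]
    · have : m = k := by omega
      subst this
      rw [nasc_succ σ (by omega), nasc_le σ le_rfl, nasc_le σ le_rfl, one_mul, mul_one]
end

section
include hbraid hcomm

/-- Shift identity: `σ (j+1) * nasc k m = nasc k m * σ j` for `k ≤ j`, `j + 2 ≤ m`. -/
lemma shift_nasc (j k : ℕ) (hkj : k ≤ j) :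
    ∀ m, j + 2 ≤ m → σ (j + 1) * nasc σ k m = nasc σ k m * σ j := by
  intro m
  induction m with
  | zero => omega
  | succ m ih =>
    intro hm
    by_cases h : j + 2 ≤ m
    · rw [nasc_succ σ (by omega), ← mul_assoc, ih h, mul_assoc, mul_assoc]
      congr 1
      rw [mul_neg, neg_mul, hcomm j m (by omega)]
    · have hmj : m = j + 1 := by omega
      subst hmj
      have hN : σ (j + 1) * nasc σ k j = nasc σ k j * σ (j + 1) :=
        comm_nasc_high σ hcomm (j + 1) k j le_rfl
      rw [nasc_succ σ (show ¬ j + 1 + 1 ≤ k by omega), nasc_succ σ (show ¬ j + 1 ≤ k by omega)]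
      calc σ (j + 1) * (nasc σ k j * -σ j * -σ (j + 1))
          = (σ (j + 1) * nasc σ k j) * (σ j * σ (j + 1)) := by noncomm_ring
        _ = nasc σ k j * (σ (j + 1) * σ j * σ (j + 1)) := by rw [hN]; noncomm_ring
        _ = nasc σ k j * (σ j * σ (j + 1) * σ j) := by rw [← hbraid j]
        _ = nasc σ k j * -σ j * -σ (j + 1) * σ j := by noncomm_ring
end


/-- Expansion: `f_{k→m+1} = f_{k+1→m+1} + N_{k→m+1}` for `k ≤ m`. -/
lemma auxF : ∀ m k, k ≤ m → braidF σ k (m + 1) = braidF σ (k + 1) (m + 1) + nasc σ k (m + 1) := by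
  intro m
  induction m with
  | zero =>
    intro k hk
    have hk0 : k = 0 := by omega
    subst hk0
    rw [braidF_succ σ (by omega), braidF_le σ le_rfl, braidF_le σ (by omega : 1 ≤ 0 + 1),
      nasc_succ σ (by omega), nasc_le σ le_rfl, one_mul, one_mul]
    noncomm_ring
  | succ m ih =>
    intro k hk
    by_cases h : k ≤ m
    · rw [braidF_succ σ (by omega : ¬ m + 1 + 1 ≤ k), ih k h,
        braidF_succ σ (by omega : ¬ m + 1 + 1 ≤ k + 1), nasc_succ σ (by omega : ¬ m + 1 + 1 ≤ k)]
      noncomm_ring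
    · have hkm : k = m + 1 := by omega
      subst hkm
      rw [braidF_succ σ (by omega), braidF_le σ le_rfl, braidF_le σ (by omega : m + 1 + 1 ≤ m + 1 + 1),
        nasc_succ σ (by omega), nasc_le σ le_rfl, one_mul, one_mul]
      noncomm_ring

include hbraid hcomm

/-- Conjugation: `f̄_{k+1→m+1} N_{k→m+1} = N_{k→m+1} f̄_{k→m}`. -/
lemma star (m : ℕ) : ∀ d k, m + 1 ≤ k + d →
    braidFbar σ (m + 1) (k + 1) * nasc σ k (m + 1) = nasc σ k (m + 1) * braidFbar σ m k := by
  intro d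
  induction d with
  | zero =>
    intro k hk
    rw [braidFbar_le σ (by omega : m + 1 ≤ k + 1), braidFbar_le σ (by omega : m ≤ k),
      one_mul, mul_one]
  | succ d ih =>
    intro k hk
    by_cases h0 : m + 1 ≤ k
    · rw [braidFbar_le σ (by omega : m + 1 ≤ k + 1), braidFbar_le σ (by omega : m ≤ k),
        one_mul, mul_one]
    by_cases h1 : m = k
    · subst h1
      rw [braidFbar_le σ le_rfl, braidFbar_le σ le_rfl, one_mul, mul_one]
    · -- k + 1 ≤ m
      have hkm : k + 1 ≤ m := by omega
      have hsh : σ (k + 1) * nasc σ k (m + 1) = nasc σ k (m + 1) * σ k :=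
        shift_nasc σ hbraid hcomm k k le_rfl (m + 1) (by omega)
      have hcons : nasc σ k (m + 1) = -σ k * nasc σ (k + 1) (m + 1) :=
        nasc_cons σ hcomm k (m + 1) (by omega)
      have hc : σ k * braidFbar σ (m + 1) (k + 2) = braidFbar σ (m + 1) (k + 2) * σ k :=
        comm_braidFbar σ hcomm k (m + 1) (m + 1) (k + 2) (by omega) (by omega)
      have hIH : braidFbar σ (m + 1) (k + 2) * nasc σ (k + 1) (m + 1)
          = nasc σ (k + 1) (m + 1) * braidFbar σ m (k + 1) := ih (k + 1) (by omega)
      have key2 : braidFbar σ (m + 1) (k + 2) * nasc σ k (m + 1)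
          = nasc σ k (m + 1) * braidFbar σ m (k + 1) := by
        rw [hcons]
        calc braidFbar σ (m + 1) (k + 2) * (-σ k * nasc σ (k + 1) (m + 1))
            = -((braidFbar σ (m + 1) (k + 2) * σ k) * nasc σ (k + 1) (m + 1)) := by noncomm_ring
          _ = -((σ k * braidFbar σ (m + 1) (k + 2)) * nasc σ (k + 1) (m + 1)) := by rw [hc]
          _ = -σ k * (braidFbar σ (m + 1) (k + 2) * nasc σ (k + 1) (m + 1)) := by noncomm_ring
          _ = -σ k * (nasc σ (k + 1) (m + 1) * braidFbar σ m (k + 1)) := by rw [hIH]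
          _ = -σ k * nasc σ (k + 1) (m + 1) * braidFbar σ m (k + 1) := by noncomm_ring
      rw [braidFbar_gt σ (show ¬ m + 1 ≤ k + 1 by omega), braidFbar_gt σ (show ¬ m ≤ k by omega)]
      calc (1 - braidFbar σ (m + 1) (k + 1 + 1) * σ (k + 1)) * nasc σ k (m + 1)
          = nasc σ k (m + 1)
            - braidFbar σ (m + 1) (k + 2) * (σ (k + 1) * nasc σ k (m + 1)) := by noncomm_ring
        _ = nasc σ k (m + 1)
            - braidFbar σ (m + 1) (k + 2) * (nasc σ k (m + 1) * σ k) := by rw [hsh]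
        _ = nasc σ k (m + 1)
            - (braidFbar σ (m + 1) (k + 2) * nasc σ k (m + 1)) * σ k := by noncomm_ring
        _ = nasc σ k (m + 1)
            - (nasc σ k (m + 1) * braidFbar σ m (k + 1)) * σ k := by rw [key2]
        _ = nasc σ k (m + 1) * (1 - braidFbar σ m (k + 1) * σ k) := by noncomm_ring

/-- Key identity: `f_{k→m+1} f̄_{k→m} = f̄_{k→m+1} f_{k+1→m+1}`. -/
lemma key (m : ℕ) : ∀ d k, m + 1 ≤ k + d →
    braidF σ k (m + 1) * braidFbar σ m k = braidFbar σ (m + 1) k * braidF σ (k + 1) (m + 1) := by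
  intro d
  induction d with
  | zero =>
    intro k hk
    rw [braidF_le σ (by omega : m + 1 ≤ k), braidF_le σ (by omega : m + 1 ≤ k + 1),
      braidFbar_le σ (by omega : m ≤ k), braidFbar_le σ (by omega : m + 1 ≤ k), one_mul]
  | succ d ih =>
    intro k hk
    by_cases h0 : m + 1 ≤ k
    · rw [braidF_le σ (by omega : m + 1 ≤ k), braidF_le σ (by omega : m + 1 ≤ k + 1),
        braidFbar_le σ (by omega : m ≤ k), braidFbar_le σ (by omega : m + 1 ≤ k), one_mul]
    by_cases h1 : m = k
    · subst h1
      rw [braidFbar_le σ le_rfl, braidF_le σ (le_refl (m + 1)),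
        braidF_succ σ (by omega), braidF_le σ le_rfl,
        braidFbar_gt σ (by omega : ¬ m + 1 ≤ m), braidFbar_le σ (le_refl (m + 1))]
    · -- k + 1 ≤ m
      have hkm : k + 1 ≤ m := by omega
      have hA : braidF σ k (m + 1) = braidF σ (k + 1) (m + 1) + nasc σ k (m + 1) :=
        auxF σ m k (by omega)
      have hA' : braidF σ (k + 1) (m + 1) = braidF σ (k + 2) (m + 1) + nasc σ (k + 1) (m + 1) :=
        auxF σ m (k + 1) hkm
      have hGk : braidFbar σ m k = 1 - braidFbar σ m (k + 1) * σ k :=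
        braidFbar_gt σ (by omega)
      have hGk' : braidFbar σ (m + 1) k = 1 - braidFbar σ (m + 1) (k + 1) * σ k :=
        braidFbar_gt σ (by omega)
      have hIH : braidF σ (k + 1) (m + 1) * braidFbar σ m (k + 1)
          = braidFbar σ (m + 1) (k + 1) * braidF σ (k + 2) (m + 1) := ih (k + 1) (by omega)
      have hstar' : braidFbar σ (m + 1) (k + 1) * nasc σ k (m + 1)
          = nasc σ k (m + 1) * (1 - braidFbar σ m (k + 1) * σ k) := by
        have := star σ hbraid hcomm m (m + 1) k (by omega)
        rwa [braidFbar_gt σ (show ¬ m ≤ k by omega)] at this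
      have hcons : nasc σ k (m + 1) = -σ k * nasc σ (k + 1) (m + 1) :=
        nasc_cons σ hcomm k (m + 1) (by omega)
      have hc6 : σ k * braidF σ (k + 2) (m + 1) = braidF σ (k + 2) (m + 1) * σ k :=
        comm_braidF σ hcomm k (k + 2) le_rfl (m + 1)
      rw [hA, hA', hGk, hGk']
      rw [hA'] at hIH
      calc (braidF σ (k + 2) (m + 1) + nasc σ (k + 1) (m + 1) + nasc σ k (m + 1))
            * (1 - braidFbar σ m (k + 1) * σ k)
          = (braidF σ (k + 2) (m + 1) + nasc σ (k + 1) (m + 1))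
            - ((braidF σ (k + 2) (m + 1) + nasc σ (k + 1) (m + 1)) * braidFbar σ m (k + 1)) * σ k
            + nasc σ k (m + 1) * (1 - braidFbar σ m (k + 1) * σ k) := by noncomm_ring
        _ = (braidF σ (k + 2) (m + 1) + nasc σ (k + 1) (m + 1))
            - (braidFbar σ (m + 1) (k + 1) * braidF σ (k + 2) (m + 1)) * σ k
            + braidFbar σ (m + 1) (k + 1) * nasc σ k (m + 1) := by rw [hIH, ← hstar']
        _ = (braidF σ (k + 2) (m + 1) + nasc σ (k + 1) (m + 1))
            - braidFbar σ (m + 1) (k + 1) * (braidF σ (k + 2) (m + 1) * σ k)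
            + braidFbar σ (m + 1) (k + 1) * (-σ k * nasc σ (k + 1) (m + 1)) := by
              rw [mul_assoc (braidFbar σ (m + 1) (k + 1)) (braidF σ (k + 2) (m + 1)) (σ k), hcons]
        _ = (braidF σ (k + 2) (m + 1) + nasc σ (k + 1) (m + 1))
            - braidFbar σ (m + 1) (k + 1) * (σ k * braidF σ (k + 2) (m + 1))
            + braidFbar σ (m + 1) (k + 1) * (-σ k * nasc σ (k + 1) (m + 1)) := by rw [hc6]
        _ = (1 - braidFbar σ (m + 1) (k + 1) * σ k)
            * (braidF σ (k + 2) (m + 1) + nasc σ (k + 1) (m + 1)) := by noncomm_ring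

lemma main : ∀ n : ℕ, braidAntis σ 1 n = braidFbar σ n 1 * braidAntis σ 2 n := by
  intro n
  induction n with
  | zero =>
    show (1 : A) = braidFbar σ 0 1 * 1
    rw [braidFbar_le σ (by omega), mul_one]
  | succ n ih =>
    by_cases hn : n = 0
    · subst hn
      show (if 1 ≤ 1 then (1 : A) else _) = braidFbar σ 1 1 * (if 1 ≤ 2 then 1 else _)
      rw [if_pos le_rfl, if_pos (by omega), braidFbar_le σ le_rfl, mul_one]
    · have hn1 : 1 ≤ n := by omega
      have e1 : braidAntis σ 1 (n + 1) = braidF σ 1 (n + 1) * braidAntis σ 1 n := by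
        show (if n + 1 ≤ 1 then (1 : A) else _) = _
        rw [if_neg (by omega)]
      have e2 : braidAntis σ 2 (n + 1) = braidF σ 2 (n + 1) * braidAntis σ 2 n := by
        by_cases h2 : n + 1 ≤ 2
        · have : n = 1 := by omega
          subst this
          show (if 2 ≤ 2 then (1 : A) else _) = braidF σ 2 2 * (if 1 ≤ 2 then (1 : A) else _)
          rw [if_pos le_rfl, if_pos (by omega), braidF_le σ le_rfl, mul_one]
        · show (if n + 1 ≤ 2 then (1 : A) else _) = _
          rw [if_neg h2]
      rw [e1, ih, e2, ← mul_assoc, key σ hbraid hcomm n (n + 1) 1 (by omega), mul_assoc]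

end BraidAux


/-- The two recursive definitions of the quantum antisymmetrizer agree: in the group
algebra of the braid group, `A_{1→n} = f_{1→n} A_{1→n-1}` (the definition used here)
also satisfies `A_{1→n} = f̄_{1→n} A_{2→n}`, where `A_{2→n}` is the shifted
antisymmetrizer built from `σ_2, …, σ_{n-1}`. -/
theorem braidAntis_bar_recursion {A : Type*} [Ring A] (σ : ℕ → A)
    (hbraid : ∀ i, σ i * σ (i + 1) * σ i = σ (i + 1) * σ i * σ (i + 1))
    (hcomm : ∀ i j, i + 2 ≤ j → σ i * σ j = σ j * σ i)
    (n : ℕ) (hn : 1 ≤ n) :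
    braidAntis σ 1 n = braidFbar σ n 1 * braidAntis σ 2 n := by
  exact BraidAux.main σ hbraid hcomm n
end

section
/- Quantum Zagier factorization: in the group algebra of the braid group, (1-σ_r²)(1+σ_{r-1}σ_r²)···(1+(-1)^{r-k}σ_k σ_{k+1}···σ_{r-1}σ_r²) = (1+σ_r)(1-σ_{r-1}σ_r)(1+σ_{r-2}σ_{r-1}σ_r)···(1+(-1)^{r-k}σ_k σ_{k+1}···σ_r)·f_{k→r+1}, where f_{k→r+1} = 1 - σ_r + σ_{r-1}σ_r - ... + (-1)^{r+1-k} σ_k ··· σ_r. -/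
/-- `Y_{k→r+1} = (1-σ_r²)(1+σ_{r-1}σ_r²) ⋯ (1-(-1)^{r-k} σ_k σ_{k+1} ⋯ σ_{r-1} σ_r²)`,
with `Y_{k→k} = 1` (the `i`-th factor, `i = 0, …, r-k`, is
`1 + (-1)^{i+1} σ_{r-i} ⋯ σ_{r-1} σ_r²`). -/
def braidY {A : Type*} [Ring A] (σ : ℕ → A) (r k : ℕ) : A :=
  ((List.range (r + 1 - k)).map
    (fun i => 1 + (-1 : A) ^ (i + 1) * braidRiseProd σ (r - i) r * (σ r * σ r))).prod

/-- The Zagier-type product `(1+σ_r)(1-σ_{r-1}σ_r)(1+σ_{r-2}σ_{r-1}σ_r) ⋯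
(1+(-1)^{r-k} σ_k σ_{k+1} ⋯ σ_r)` (the `i`-th factor is `1 + (-1)^i σ_{r-i} ⋯ σ_r`). -/
def braidZagierProd {A : Type*} [Ring A] (σ : ℕ → A) (r k : ℕ) : A :=
  ((List.range (r + 1 - k)).map
    (fun i => 1 + (-1 : A) ^ i * braidRiseProd σ (r - i) (r + 1))).prod

namespace BraidAux

variable {A : Type*} [Ring A] (σ : ℕ → A)

lemma rise_of_le (a b : ℕ) (h : b ≤ a) : braidRiseProd σ a b = 1 := by
  simp [braidRiseProd, Nat.sub_eq_zero_of_le h]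

lemma rise_self (a : ℕ) : braidRiseProd σ a a = 1 := rise_of_le σ a a le_rfl

lemma rise_succ (a b : ℕ) (h : a ≤ b) :
    braidRiseProd σ a (b + 1) = braidRiseProd σ a b * σ b := by
  unfold braidRiseProd
  rw [show b + 1 - a = (b - a) + 1 by omega, List.range_succ, List.map_append,
    List.prod_append, List.map_singleton, List.prod_singleton,
    show a + (b - a) = b by omega]

lemma rise_one (a : ℕ) : braidRiseProd σ a (a + 1) = σ a := by
  rw [rise_succ σ a a le_rfl, rise_self, one_mul]

lemma rise_append (a b c : ℕ) (hab : a ≤ b) (hbc : b ≤ c) :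
    braidRiseProd σ a b * braidRiseProd σ b c = braidRiseProd σ a c := by
  induction c, hbc using Nat.le_induction with
  | base => rw [rise_self, mul_one]
  | succ c hc ih =>
      rw [rise_succ σ b c hc, rise_succ σ a c (hab.trans hc), ← mul_assoc, ih]

lemma comm_rise (m a : ℕ) : ∀ b, (∀ j, a ≤ j → j < b → σ m * σ j = σ j * σ m) →
    σ m * braidRiseProd σ a b = braidRiseProd σ a b * σ m := by
  intro b
  induction b with
  | zero => intro _; rw [rise_of_le σ a 0 (Nat.zero_le a), mul_one, one_mul]
  | succ b ih =>
      intro h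
      by_cases hab : a ≤ b
      · rw [rise_succ σ a b hab, ← mul_assoc, ih (fun j hj hjb => h j hj (by omega)),
          mul_assoc, h b hab (by omega), ← mul_assoc]
      · rw [rise_of_le σ a (b + 1) (by omega), mul_one, one_mul]



variable (hbraid : ∀ i, σ i * σ (i + 1) * σ i = σ (i + 1) * σ i * σ (i + 1))
variable (hcomm : ∀ i j, i + 2 ≤ j → σ i * σ j = σ j * σ i)

include hbraid hcomm in
lemma shift (k i b : ℕ) (hk : k ≤ i) (hib : i + 1 < b) :
    braidRiseProd σ k b * σ i = σ (i + 1) * braidRiseProd σ k b := by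
  have hsplit : braidRiseProd σ k b
      = braidRiseProd σ k i * (σ i * (σ (i + 1) * braidRiseProd σ (i + 2) b)) := by
    rw [← rise_append σ k i b hk (by omega), ← rise_append σ i (i + 2) b (by omega) (by omega),
      show i + 2 = (i + 1) + 1 from rfl, rise_succ σ i (i + 1) (by omega), rise_one, mul_assoc]
  have h1 : braidRiseProd σ (i + 2) b * σ i = σ i * braidRiseProd σ (i + 2) b :=
    (comm_rise σ i (i + 2) b (fun j hj _ => hcomm i j (by omega))).symm
  have h2 : σ (i + 1) * braidRiseProd σ k i = braidRiseProd σ k i * σ (i + 1) :=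
    comm_rise σ (i + 1) k i (fun j hj hji => (hcomm j (i + 1) (by omega)).symm)
  have hb : σ i * (σ (i + 1) * (σ i * braidRiseProd σ (i + 2) b))
      = σ (i + 1) * (σ i * (σ (i + 1) * braidRiseProd σ (i + 2) b)) := by
    rw [← mul_assoc, ← mul_assoc, hbraid i, mul_assoc, mul_assoc]
  calc braidRiseProd σ k b * σ i
      = braidRiseProd σ k i * (σ i * (σ (i + 1) * (braidRiseProd σ (i + 2) b * σ i))) := by
        rw [hsplit]; simp only [mul_assoc]
    _ = braidRiseProd σ k i * (σ i * (σ (i + 1) * (σ i * braidRiseProd σ (i + 2) b))) := by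
        rw [h1]
    _ = braidRiseProd σ k i * (σ (i + 1) * (σ i * (σ (i + 1) * braidRiseProd σ (i + 2) b))) := by
        rw [hb]
    _ = σ (i + 1) * braidRiseProd σ k b := by
        rw [← mul_assoc, ← h2, hsplit]; simp only [mul_assoc]

include hbraid hcomm in
lemma claim (r k : ℕ) : ∀ d j, k ≤ j → r ≤ j + d →
    braidRiseProd σ k (r + 1) * braidRiseProd σ j r
      = braidRiseProd σ (j + 1) (r + 1) * braidRiseProd σ k (r + 1) := by
  intro d
  induction d with
  | zero =>
      intro j hk hr
      rw [rise_of_le σ j r (by omega), rise_of_le σ (j + 1) (r + 1) (by omega),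
        mul_one, one_mul]
  | succ d ih =>
      intro j hk hr
      by_cases hjr : r ≤ j
      · rw [rise_of_le σ j r hjr, rise_of_le σ (j + 1) (r + 1) (by omega), mul_one, one_mul]
      · push_neg at hjr
        have hcons : braidRiseProd σ j r = σ j * braidRiseProd σ (j + 1) r := by
          rw [← rise_append σ j (j + 1) r (by omega) (by omega), rise_one]
        have hcons2 : braidRiseProd σ (j + 1) (r + 1)
            = σ (j + 1) * braidRiseProd σ (j + 2) (r + 1) := by
          rw [← rise_append σ (j + 1) (j + 2) (r + 1) (by omega) (by omega), rise_one]
        rw [hcons, ← mul_assoc, shift σ hbraid hcomm k j (r + 1) hk (by omega),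
          mul_assoc, ih (j + 1) (by omega) (by omega), hcons2, mul_assoc]

include hbraid hcomm in
lemma key_s5 (r k j : ℕ) (hk : k ≤ j) (hj : j ≤ r) :
    braidRiseProd σ k (r + 1) * braidRiseProd σ j (r + 1)
      = braidRiseProd σ (j + 1) (r + 1) * (braidRiseProd σ k (r + 1) * σ r) := by
  rw [rise_succ σ j r hj, ← mul_assoc,
    claim σ hbraid hcomm r k (r - j) j hk (by omega), mul_assoc]

lemma f_self (k : ℕ) : braidF σ k k = 1 := by
  cases k with
  | zero => rfl
  | succ m => simp [braidF]

lemma f_succ (k m : ℕ) (h : k ≤ m) : braidF σ k (m + 1) = 1 - braidF σ k m * σ m := by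
  simp [braidF, Nat.not_succ_le_self, show ¬ (m + 1 ≤ k) by omega]

lemma f_split (k m : ℕ) (h : k < m) :
    braidF σ k m = braidF σ (k + 1) m + (-1 : A) ^ (m - k) * braidRiseProd σ k m := by
  induction m, h using Nat.le_induction with
  | base =>
      rw [f_succ σ k k le_rfl, f_self, f_self, one_mul, rise_one,
        show k + 1 - k = 1 by omega, pow_one]
      noncomm_ring
  | succ m hm ih =>
      rw [f_succ σ k m (by omega), f_succ σ (k + 1) m (by omega), ih,
        show m + 1 - k = (m - k) + 1 by omega, pow_succ,
        rise_succ σ k m (by omega)]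
      noncomm_ring

include hbraid hcomm in
lemma dagger (r k : ℕ) : ∀ d j, j + d = r + 1 → k + 1 ≤ j →
    braidRiseProd σ k (r + 1) * braidF σ j (r + 1)
      = - (braidF σ j (r + 1) * (braidRiseProd σ k (r + 1) * σ r))
        + (-1 : A) ^ d * (braidRiseProd σ j (r + 1) * (braidRiseProd σ k (r + 1) * σ r))
        + braidRiseProd σ k (r + 1) := by
  intro d
  induction d with
  | zero =>
      intro j hj hkj
      have : j = r + 1 := by omega
      subst this
      rw [f_self, rise_self]
      noncomm_ring
  | succ d ih =>
      intro j hj hkj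
      have hjr : j ≤ r := by omega
      rw [f_split σ j (r + 1) (by omega), show r + 1 - j = d + 1 by omega]
      have hc : braidRiseProd σ k (r + 1) * ((-1 : A) ^ (d + 1) * braidRiseProd σ j (r + 1))
          = (-1 : A) ^ (d + 1)
            * (braidRiseProd σ k (r + 1) * braidRiseProd σ j (r + 1)) := by
        rw [← mul_assoc, ← ((Commute.neg_one_left _).pow_left (d + 1)).eq, mul_assoc]
      rw [mul_add, ih (j + 1) (by omega) (by omega), hc,
        key_s5 σ hbraid hcomm r k j (by omega) hjr, pow_succ]
      noncomm_ring

include hbraid hcomm in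
lemma main_s5 (r : ℕ) : ∀ d k, k + d = r + 1 →
    braidY σ r k = braidZagierProd σ r k * braidF σ k (r + 1) := by
  intro d
  induction d with
  | zero =>
      intro k hk
      have hkr : k = r + 1 := by omega
      subst hkr
      simp [braidY, braidZagierProd, f_self]
  | succ d ih =>
      intro k hk
      have hkr : k ≤ r := by omega
      have hY : braidY σ r k = braidY σ r (k + 1)
          * (1 + (-1 : A) ^ (d + 1) * (braidRiseProd σ k (r + 1) * σ r)) := by
        unfold braidY
        rw [show r + 1 - k = d + 1 by omega, show r + 1 - (k + 1) = d by omega,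
          List.range_succ]
        simp only [List.map_append, List.prod_append, List.map_singleton,
          List.prod_singleton]
        rw [show r - d = k by omega, rise_succ σ k r hkr]
        noncomm_ring
      have hZ : braidZagierProd σ r k = braidZagierProd σ r (k + 1)
          * (1 + (-1 : A) ^ d * braidRiseProd σ k (r + 1)) := by
        unfold braidZagierProd
        rw [show r + 1 - k = d + 1 by omega, show r + 1 - (k + 1) = d by omega,
          List.range_succ]
        simp only [List.map_append, List.prod_append, List.map_singleton,
          List.prod_singleton]
        rw [show r - d = k by omega]
      have hf : braidF σ k (r + 1) = braidF σ (k + 1) (r + 1)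
          + (-1 : A) ^ (d + 1) * braidRiseProd σ k (r + 1) := by
        rw [f_split σ k (r + 1) (by omega), show r + 1 - k = d + 1 by omega]
      have hd := dagger σ hbraid hcomm r k d (k + 1) (by omega) le_rfl
      rw [← key_s5 σ hbraid hcomm r k k le_rfl hkr] at hd
      have h1 : braidF σ (k + 1) (r + 1) * (braidRiseProd σ k (r + 1) * σ r)
          = -(braidRiseProd σ k (r + 1) * braidF σ (k + 1) (r + 1))
            + (-1 : A) ^ d * (braidRiseProd σ k (r + 1) * braidRiseProd σ k (r + 1))
            + braidRiseProd σ k (r + 1) := by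
        rw [hd]; abel
      have hinner : braidF σ (k + 1) (r + 1)
            * (1 + (-1 : A) ^ (d + 1) * (braidRiseProd σ k (r + 1) * σ r))
          = (1 + (-1 : A) ^ d * braidRiseProd σ k (r + 1))
            * (braidF σ (k + 1) (r + 1)
              + (-1 : A) ^ (d + 1) * braidRiseProd σ k (r + 1)) := by
        have hp : ((-1 : A)) ^ (d + 1) = -((-1 : A)) ^ d := by
          rw [pow_succ, mul_neg_one]
        rcases Nat.even_or_odd d with hpar | hpar
        · rw [hpar.neg_one_pow] at h1
          rw [hp, hpar.neg_one_pow]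
          have he : braidF σ (k + 1) (r + 1) * (1 + -(1 : A) * (braidRiseProd σ k (r + 1) * σ r))
              = braidF σ (k + 1) (r + 1)
                - braidF σ (k + 1) (r + 1) * (braidRiseProd σ k (r + 1) * σ r) := by
            noncomm_ring
          rw [he, h1]
          noncomm_ring
        · rw [hpar.neg_one_pow] at h1
          rw [hp, hpar.neg_one_pow]
          have he : braidF σ (k + 1) (r + 1) * (1 + - -(1 : A) * (braidRiseProd σ k (r + 1) * σ r))
              = braidF σ (k + 1) (r + 1)
                + braidF σ (k + 1) (r + 1) * (braidRiseProd σ k (r + 1) * σ r) := by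
            noncomm_ring
          rw [he, h1]
          noncomm_ring
      calc braidY σ r k
          = braidY σ r (k + 1)
            * (1 + (-1 : A) ^ (d + 1) * (braidRiseProd σ k (r + 1) * σ r)) := hY
        _ = braidZagierProd σ r (k + 1) * braidF σ (k + 1) (r + 1)
            * (1 + (-1 : A) ^ (d + 1) * (braidRiseProd σ k (r + 1) * σ r)) := by
              rw [ih (k + 1) (by omega)]
        _ = braidZagierProd σ r (k + 1)
            * ((1 + (-1 : A) ^ d * braidRiseProd σ k (r + 1))
              * (braidF σ (k + 1) (r + 1)
                + (-1 : A) ^ (d + 1) * braidRiseProd σ k (r + 1))) := by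
              rw [mul_assoc, hinner]
        _ = braidZagierProd σ r k * braidF σ k (r + 1) := by
              rw [hZ, hf, mul_assoc]

end BraidAux

/-- Quantum Zagier factorization in the group algebra of the braid group:
`Y_{k→r+1} = (1+σ_r)(1-σ_{r-1}σ_r) ⋯ (1+(-1)^{r-k} σ_k ⋯ σ_r) · f_{k→r+1}`. -/
theorem braid_zagier_factorization {A : Type*} [Ring A] (σ : ℕ → A)
    (hbraid : ∀ i, σ i * σ (i + 1) * σ i = σ (i + 1) * σ i * σ (i + 1))
    (hcomm : ∀ i j, i + 2 ≤ j → σ i * σ j = σ j * σ i)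
    (r k : ℕ) (hk : 1 ≤ k) (hkr : k ≤ r + 1) :
    braidY σ r k = braidZagierProd σ r k * braidF σ k (r + 1) :=
  BraidAux.main_s5 σ hbraid hcomm r (r + 1 - k) k (by omega)
end

section
/- In the group algebra of the braid group, Y_{1→r+1}·f̄_{1→r} = ((-1)^{r+1} f_{1→r+1}·σ_r σ_{r-1}···σ_1 + f̄_{1→r+1})·Y_{2→r+1}, where Y_{k→r+1} = (1-σ_r²)(1+σ_{r-1}σ_r²)···(1+(-1)^{r-k}σ_k···σ_{r-1}σ_r²). -/
section BraidAux

variable {A : Type*} [Ring A] (σ : ℕ → A)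

lemma braidRiseProd_empty (a b : ℕ) (h : b ≤ a) : braidRiseProd σ a b = 1 := by
  unfold braidRiseProd
  rw [Nat.sub_eq_zero_of_le h]
  simp

lemma braidRiseProd_append (a b : ℕ) (h : a ≤ b) :
    braidRiseProd σ a (b + 1) = braidRiseProd σ a b * σ b := by
  unfold braidRiseProd
  rw [show b + 1 - a = (b - a) + 1 from by omega, List.range_succ, List.map_append,
    List.prod_append]
  simp only [List.map_cons, List.map_nil, List.prod_cons, List.prod_nil, mul_one]
  rw [show a + (b - a) = b from by omega]

lemma braidRiseProd_cons (a b : ℕ) (h : a < b) :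
    braidRiseProd σ a b = σ a * braidRiseProd σ (a + 1) b := by
  unfold braidRiseProd
  rw [show b - a = (b - (a + 1)) + 1 from by omega, List.range_succ_eq_map, List.map_cons,
    List.prod_cons, List.map_map]
  have h1 : ((fun i => σ (a + i)) ∘ Nat.succ) = fun i => σ (a + 1 + i) := by
    funext i
    simp only [Function.comp_apply]
    congr 1
    omega
  rw [h1, add_zero]

lemma braidFallProd_cons (a b : ℕ) (h : a ≤ b) :
    braidFallProd σ a (b + 1) = σ b * braidFallProd σ a b := by
  unfold braidFallProd
  rw [show b + 1 - a = (b - a) + 1 from by omega, List.range_succ_eq_map, List.map_cons,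
    List.prod_cons, List.map_map]
  have h1 : ((fun i => σ (b + 1 - 1 - i)) ∘ Nat.succ) = fun i => σ (b - 1 - i) := by
    funext i
    simp only [Function.comp_apply]
    congr 1
    omega
  have h2 : b + 1 - 1 - 0 = b := by omega
  rw [h1, h2]

lemma braidFallProd_empty (a b : ℕ) (h : b ≤ a) : braidFallProd σ a b = 1 := by
  unfold braidFallProd
  rw [Nat.sub_eq_zero_of_le h]
  simp

lemma braidFallProd_append (a b : ℕ) (h : a < b) :
    braidFallProd σ a b = braidFallProd σ (a + 1) b * σ a := by
  unfold braidFallProd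
  rw [show b - a = (b - (a + 1)) + 1 from by omega, List.range_succ, List.map_append,
    List.prod_append]
  simp only [List.map_cons, List.map_nil, List.prod_cons, List.prod_nil, mul_one]
  rw [show b - 1 - (b - (a + 1)) = a from by omega]

lemma braidF_of_le (k m : ℕ) (h : m ≤ k) : braidF σ k m = 1 := by
  cases m with
  | zero => rfl
  | succ m => simp [braidF, h]

lemma braidF_succ (k m : ℕ) (h : k ≤ m) : braidF σ k (m + 1) = 1 - braidF σ k m * σ m := by
  simp only [braidF, if_neg (by omega : ¬ (m + 1 ≤ k))]

lemma braidFbar_of_le (m k : ℕ) (h : m ≤ k) : braidFbar σ m k = 1 := by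
  rw [braidFbar, dif_pos h]

lemma braidFbar_of_lt (m k : ℕ) (h : k < m) :
    braidFbar σ m k = 1 - braidFbar σ m (k + 1) * σ k := by
  rw [braidFbar, dif_neg (by omega)]

lemma braidF_split (k m : ℕ) (h : k < m) :
    braidF σ k m = braidF σ (k + 1) m + (-1 : A) ^ (m - k) * braidRiseProd σ k m := by
  induction m with
  | zero => omega
  | succ m ih =>
    rcases Nat.lt_or_ge k m with hm | hm
    · rw [braidF_succ σ k m (le_of_lt hm), ih hm, braidF_succ σ (k + 1) m hm,
        show m + 1 - k = (m - k) + 1 from by omega, pow_succ,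
        braidRiseProd_append σ k m (le_of_lt hm)]
      noncomm_ring
    · have hkm : k = m := by omega
      subst hkm
      have h1 : braidRiseProd σ k (k + 1) = σ k := by
        rw [braidRiseProd_append σ k k le_rfl, braidRiseProd_empty σ k k le_rfl, one_mul]
      rw [braidF_succ σ k k le_rfl, braidF_of_le σ k k le_rfl,
        braidF_of_le σ (k + 1) (k + 1) le_rfl, show k + 1 - k = 1 from by omega, h1]
      noncomm_ring

lemma braidFbar_split (m k : ℕ) (h : k ≤ m) :
    braidFbar σ (m + 1) k =
      braidFbar σ m k + (-1 : A) ^ (m + 1 - k) * braidFallProd σ k (m + 1) := by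
  obtain ⟨n, rfl⟩ : ∃ n, m = k + n := ⟨m - k, by omega⟩
  clear h
  induction n generalizing k with
  | zero =>
    have h1 : braidFallProd σ k (k + 0 + 1) = σ k := by
      rw [show k + 0 + 1 = k + 1 from rfl, braidFallProd_cons σ k k le_rfl,
        braidFallProd_empty σ k k le_rfl, mul_one]
    rw [braidFbar_of_lt σ (k + 0 + 1) k (by omega), braidFbar_of_le σ (k + 0 + 1) (k + 1) (by omega),
      braidFbar_of_le σ (k + 0) k (by omega), show k + 0 + 1 - k = 1 from by omega, h1]
    noncomm_ring
  | succ n ih =>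
    have e1 := ih (k + 1)
    rw [show k + 1 + n = k + (n + 1) from by omega,
      show k + (n + 1) + 1 - (k + 1) = n + 1 from by omega] at e1
    rw [braidFbar_of_lt σ (k + (n + 1) + 1) k (by omega), braidFbar_of_lt σ (k + (n + 1)) k (by omega),
      e1, show k + (n + 1) + 1 - k = n + 2 from by omega]
    have e2 : braidFallProd σ k (k + (n + 1) + 1) = braidFallProd σ (k + 1) (k + (n + 1) + 1) * σ k :=
      braidFallProd_append σ k (k + (n + 1) + 1) (by omega)
    rw [e2, pow_succ]
    noncomm_ring

lemma commute_braidRiseProd (x : A) (a b : ℕ)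
    (h : ∀ j, a ≤ j → j < b → Commute x (σ j)) : Commute x (braidRiseProd σ a b) := by
  unfold braidRiseProd
  apply Commute.list_prod_right
  intro y hy
  simp only [List.mem_map, List.mem_range] at hy
  obtain ⟨i, hi, rfl⟩ := hy
  exact h (a + i) (by omega) (by omega)

lemma commute_braidFallProd (x : A) (a b : ℕ)
    (h : ∀ j, a ≤ j → j < b → Commute x (σ j)) : Commute x (braidFallProd σ a b) := by
  unfold braidFallProd
  apply Commute.list_prod_right
  intro y hy
  simp only [List.mem_map, List.mem_range] at hy
  obtain ⟨i, hi, rfl⟩ := hy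
  exact h (b - 1 - i) (by omega) (by omega)

lemma commute_braidFbar (x : A) (m k : ℕ)
    (h : ∀ j, k ≤ j → j < m → Commute x (σ j)) : Commute x (braidFbar σ m k) := by
  rcases le_or_gt m k with hmk | hmk
  · rw [braidFbar_of_le σ m k hmk]
    exact Commute.one_right x
  · obtain ⟨n, rfl⟩ : ∃ n, m = k + n + 1 := ⟨m - k - 1, by omega⟩
    clear hmk
    induction n generalizing k with
    | zero =>
      rw [braidFbar_of_lt σ (k + 0 + 1) k (by omega),
        braidFbar_of_le σ (k + 0 + 1) (k + 1) (by omega), one_mul]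
      exact (Commute.one_right x).sub_right (h k (by omega) (by omega))
    | succ n ih =>
      rw [braidFbar_of_lt σ (k + (n + 1) + 1) k (by omega)]
      have e1 := ih (k + 1) (fun j hj hj' => h j (by omega) (by omega))
      rw [show k + 1 + n + 1 = k + (n + 1) + 1 from by omega] at e1
      exact (Commute.one_right x).sub_right (e1.mul_right (h k (by omega) (by omega)))

lemma commute_braidY (x : A) (r k : ℕ)
    (h : ∀ j, k ≤ j → j ≤ r → Commute x (σ j)) : Commute x (braidY σ r k) := by
  unfold braidY
  apply Commute.list_prod_right
  intro y hy
  simp only [List.mem_map, List.mem_range] at hy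
  obtain ⟨i, hi, rfl⟩ := hy
  have h1 : Commute x ((-1 : A) ^ (i + 1)) := (Commute.neg_one_right x).pow_right _
  have h2 : Commute x (braidRiseProd σ (r - i) r) :=
    commute_braidRiseProd σ x (r - i) r (fun j hj hj' => h j (by omega) (by omega))
  have h3 : Commute x (σ r) := h r (by omega) le_rfl
  exact (Commute.one_right x).add_right ((h1.mul_right h2).mul_right (h3.mul_right h3))

lemma conj_list_prod_right (u : A) (f g : ℕ → A) (n : ℕ)
    (h : ∀ i, i < n → u * f i = g i * u) :
    u * ((List.range n).map f).prod = ((List.range n).map g).prod * u := by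
  induction n with
  | zero => simp
  | succ n ih =>
    rw [List.range_succ, List.map_append, List.map_append, List.prod_append, List.prod_append]
    simp only [List.map_cons, List.map_nil, List.prod_cons, List.prod_nil, mul_one]
    rw [← mul_assoc, ih (fun i hi => h i (by omega)), mul_assoc, h n (by omega), ← mul_assoc]

lemma conj_list_prod_left (u : A) (f g : ℕ → A) (n : ℕ)
    (h : ∀ i, i < n → f i * u = u * g i) :
    ((List.range n).map f).prod * u = u * ((List.range n).map g).prod := by
  induction n with
  | zero => simp
  | succ n ih =>
    rw [List.range_succ, List.map_append, List.map_append, List.prod_append, List.prod_append]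
    simp only [List.map_cons, List.map_nil, List.prod_cons, List.prod_nil, mul_one]
    rw [mul_assoc, h n (by omega), ← mul_assoc, ih (fun i hi => h i (by omega)), mul_assoc]

lemma braidRiseProd_conj_right (u : A) (a b : ℕ)
    (h : ∀ j, a ≤ j → j < b → u * σ (j + 1) = σ j * u) :
    u * braidRiseProd σ (a + 1) (b + 1) = braidRiseProd σ a b * u := by
  unfold braidRiseProd
  rw [show b + 1 - (a + 1) = b - a from by omega]
  refine conj_list_prod_right u _ _ _ (fun i hi => ?_)
  rw [show a + 1 + i = (a + i) + 1 from by omega]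
  exact h (a + i) (by omega) (by omega)

lemma braidRiseProd_conj_left (u : A) (a b : ℕ)
    (h : ∀ j, a ≤ j → j < b → σ (j + 1) * u = u * σ j) :
    braidRiseProd σ (a + 1) (b + 1) * u = u * braidRiseProd σ a b := by
  unfold braidRiseProd
  rw [show b + 1 - (a + 1) = b - a from by omega]
  refine conj_list_prod_left u _ _ _ (fun i hi => ?_)
  rw [show a + 1 + i = (a + i) + 1 from by omega]
  exact h (a + i) (by omega) (by omega)

lemma braidFbar_conj (u : A) (m k : ℕ) (hkm : k ≤ m)
    (h : ∀ j, k ≤ j → j < m → u * σ j = σ (j + 1) * u) :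
    u * braidFbar σ m k = braidFbar σ (m + 1) (k + 1) * u := by
  obtain ⟨n, rfl⟩ : ∃ n, m = k + n := ⟨m - k, by omega⟩
  clear hkm
  induction n generalizing k with
  | zero =>
    rw [braidFbar_of_le σ (k + 0) k (by omega), braidFbar_of_le σ (k + 0 + 1) (k + 1) (by omega),
      one_mul, mul_one]
  | succ n ih =>
    have e1 := ih (k + 1) (fun j hj hj' => h j (by omega) (by omega))
    rw [show k + 1 + n = k + (n + 1) from by omega,
      show k + 1 + 1 = k + 2 from by omega] at e1
    have e2 := h k le_rfl (by omega)
    rw [braidFbar_of_lt σ (k + (n + 1)) k (by omega),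
      braidFbar_of_lt σ (k + (n + 1) + 1) (k + 1) (by omega)]
    linear_combination (norm := noncomm_ring)
      - e1 * σ k - braidFbar σ (k + (n + 1) + 1) (k + 2) * e2

lemma braidY_conj_right (u : A) (r k : ℕ)
    (h : ∀ j, k ≤ j → j ≤ r → u * σ (j + 1) = σ j * u) :
    u * braidY σ (r + 1) (k + 1) = braidY σ r k * u := by
  unfold braidY
  rw [show r + 1 + 1 - (k + 1) = r + 1 - k from by omega]
  refine conj_list_prod_right u _ _ _ (fun i hi => ?_)
  have hri : r + 1 - i = (r - i) + 1 := by omega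
  have e1 : u * braidRiseProd σ (r + 1 - i) (r + 1) = braidRiseProd σ (r - i) r * u := by
    rw [hri]
    exact braidRiseProd_conj_right σ u (r - i) r (fun j hj hj' => h j (by omega) (by omega))
  have e2 : u * σ (r + 1) = σ r * u := h r (by omega) le_rfl
  have e3 : ((-1 : A) ^ (i + 1)) * u = u * ((-1 : A) ^ (i + 1)) :=
    ((Commute.neg_one_left u).pow_left (i + 1)).eq
  linear_combination (norm := noncomm_ring)
    - (e3 * (braidRiseProd σ (r + 1 - i) (r + 1) * (σ (r + 1) * σ (r + 1))))
    + (-1 : A) ^ (i + 1) * e1 * (σ (r + 1) * σ (r + 1))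
    + (-1 : A) ^ (i + 1) * braidRiseProd σ (r - i) r * e2 * σ (r + 1)
    + (-1 : A) ^ (i + 1) * braidRiseProd σ (r - i) r * σ r * e2

lemma braidY_conj_left (u : A) (r k : ℕ)
    (h : ∀ j, k ≤ j → j ≤ r → σ (j + 1) * u = u * σ j) :
    braidY σ (r + 1) (k + 1) * u = u * braidY σ r k := by
  unfold braidY
  rw [show r + 1 + 1 - (k + 1) = r + 1 - k from by omega]
  refine conj_list_prod_left u _ _ _ (fun i hi => ?_)
  have hri : r + 1 - i = (r - i) + 1 := by omega
  have e1 : braidRiseProd σ (r + 1 - i) (r + 1) * u = u * braidRiseProd σ (r - i) r := by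
    rw [hri]
    exact braidRiseProd_conj_left σ u (r - i) r (fun j hj hj' => h j (by omega) (by omega))
  have e2 : σ (r + 1) * u = u * σ r := h r (by omega) le_rfl
  have e3 : ((-1 : A) ^ (i + 1)) * u = u * ((-1 : A) ^ (i + 1)) :=
    ((Commute.neg_one_left u).pow_left (i + 1)).eq
  linear_combination (norm := noncomm_ring)
    (-1 : A) ^ (i + 1) * e1 * (σ r * σ r)
    + (-1 : A) ^ (i + 1) * braidRiseProd σ (r + 1 - i) (r + 1) * e2 * σ r
    + (-1 : A) ^ (i + 1) * braidRiseProd σ (r + 1 - i) (r + 1) * σ (r + 1) * e2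
    + e3 * (braidRiseProd σ (r - i) r * (σ r * σ r))

lemma braidRiseProd_mul_sigma
    (hbraid : ∀ i, σ i * σ (i + 1) * σ i = σ (i + 1) * σ i * σ (i + 1))
    (hcomm : ∀ i j, i + 2 ≤ j → σ i * σ j = σ j * σ i)
    (a b j : ℕ) (h1 : a ≤ j) (h2 : j + 2 ≤ b) :
    braidRiseProd σ a b * σ j = σ (j + 1) * braidRiseProd σ a b := by
  induction b with
  | zero => omega
  | succ b ih =>
    rcases Nat.lt_or_ge (j + 2) (b + 1) with hb | hb
    · have hab : a ≤ b := by omega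
      rw [braidRiseProd_append σ a b hab]
      calc braidRiseProd σ a b * σ b * σ j
          = braidRiseProd σ a b * (σ b * σ j) := by rw [mul_assoc]
        _ = braidRiseProd σ a b * (σ j * σ b) := by rw [← hcomm j b (by omega)]
        _ = braidRiseProd σ a b * σ j * σ b := by rw [mul_assoc]
        _ = σ (j + 1) * braidRiseProd σ a b * σ b := by rw [ih (by omega)]
        _ = σ (j + 1) * (braidRiseProd σ a b * σ b) := by rw [mul_assoc]
    · have hb' : b = j + 1 := by omega
      subst hb'
      have er : braidRiseProd σ a (j + 1 + 1) = braidRiseProd σ a j * σ j * σ (j + 1) := by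
        rw [braidRiseProd_append σ a (j + 1) (by omega), braidRiseProd_append σ a j h1]
      have hc : σ (j + 1) * braidRiseProd σ a j = braidRiseProd σ a j * σ (j + 1) :=
        (commute_braidRiseProd σ (σ (j + 1)) a j
          (fun t ht ht' => ((hcomm t (j + 1) (by omega)).symm : _))).eq
      rw [er]
      linear_combination (norm := noncomm_ring)
        braidRiseProd σ a j * hbraid j - hc * (σ j * σ (j + 1))

lemma braidFallProd_mul_sigma
    (hbraid : ∀ i, σ i * σ (i + 1) * σ i = σ (i + 1) * σ i * σ (i + 1))
    (hcomm : ∀ i j, i + 2 ≤ j → σ i * σ j = σ j * σ i)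
    (a b j : ℕ) (h1 : a ≤ j) (h2 : j + 1 < b) :
    braidFallProd σ a b * σ (j + 1) = σ j * braidFallProd σ a b := by
  induction b with
  | zero => omega
  | succ b ih =>
    rcases Nat.lt_or_ge (j + 1) b with hb | hb
    · have hab : a ≤ b := by omega
      rw [braidFallProd_cons σ a b hab]
      calc σ b * braidFallProd σ a b * σ (j + 1)
          = σ b * (braidFallProd σ a b * σ (j + 1)) := by rw [mul_assoc]
        _ = σ b * (σ j * braidFallProd σ a b) := by rw [ih hb]
        _ = σ b * σ j * braidFallProd σ a b := by rw [mul_assoc]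
        _ = σ j * σ b * braidFallProd σ a b := by rw [← hcomm j b (by omega)]
        _ = σ j * (σ b * braidFallProd σ a b) := by rw [mul_assoc]
    · have hb' : b = j + 1 := by omega
      subst hb'
      rw [braidFallProd_cons σ a (j + 1) (by omega), braidFallProd_cons σ a j h1]
      have hc : σ (j + 1) * braidFallProd σ a j = braidFallProd σ a j * σ (j + 1) :=
        (commute_braidFallProd σ (σ (j + 1)) a j
          (fun t ht ht' => ((hcomm t (j + 1) (by omega)).symm : _))).eq
      linear_combination (norm := noncomm_ring)
        - (σ (j + 1) * σ j * hc) - hbraid j * braidFallProd σ a j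

lemma braidRiseProd_shift (a b : ℕ) :
    braidRiseProd (fun i => σ (i + 1)) a b = braidRiseProd σ (a + 1) (b + 1) := by
  unfold braidRiseProd
  rw [show b + 1 - (a + 1) = b - a from by omega]
  apply congrArg List.prod
  apply List.map_congr_left
  intro i _
  show σ (a + i + 1) = σ (a + 1 + i)
  congr 1
  omega

lemma braidFallProd_shift (a b : ℕ) :
    braidFallProd (fun i => σ (i + 1)) a b = braidFallProd σ (a + 1) (b + 1) := by
  unfold braidFallProd
  rw [show b + 1 - (a + 1) = b - a from by omega]
  apply congrArg List.prod
  apply List.map_congr_left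
  intro i hi
  rw [List.mem_range] at hi
  show σ (b - 1 - i + 1) = σ (b + 1 - 1 - i)
  congr 1
  omega

lemma braidF_shift (k m : ℕ) :
    braidF (fun i => σ (i + 1)) k m = braidF σ (k + 1) (m + 1) := by
  induction m with
  | zero =>
    rw [show braidF (fun i => σ (i + 1)) k 0 = 1 from rfl, braidF_of_le σ (k + 1) 1 (by omega)]
  | succ m ih =>
    by_cases h : m + 1 ≤ k
    · rw [braidF_of_le (fun i => σ (i + 1)) k (m + 1) h,
        braidF_of_le σ (k + 1) (m + 2) (by omega)]
    · simp only [braidF_succ (fun i => σ (i + 1)) k m (by omega),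
        braidF_succ σ (k + 1) (m + 1) (by omega), ih]

lemma braidFbar_shift (m k : ℕ) :
    braidFbar (fun i => σ (i + 1)) m k = braidFbar σ (m + 1) (k + 1) := by
  rcases le_or_gt m k with hmk | hmk
  · rw [braidFbar_of_le (fun i => σ (i + 1)) m k hmk, braidFbar_of_le σ (m + 1) (k + 1) (by omega)]
  · obtain ⟨n, rfl⟩ : ∃ n, m = k + n + 1 := ⟨m - k - 1, by omega⟩
    clear hmk
    induction n generalizing k with
    | zero =>
      simp only [braidFbar_of_lt (fun i => σ (i + 1)) (k + 0 + 1) k (by omega),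
        braidFbar_of_lt σ (k + 0 + 1 + 1) (k + 1) (by omega),
        braidFbar_of_le (fun i => σ (i + 1)) (k + 0 + 1) (k + 1) (by omega),
        braidFbar_of_le σ (k + 0 + 1 + 1) (k + 1 + 1) (by omega)]
    | succ n ih =>
      have e1 := ih (k + 1)
      rw [show k + 1 + n + 1 = k + (n + 1) + 1 from by omega] at e1
      simp only [braidFbar_of_lt (fun i => σ (i + 1)) (k + (n + 1) + 1) k (by omega),
        braidFbar_of_lt σ (k + (n + 1) + 1 + 1) (k + 1) (by omega), e1]

lemma braidY_shift (r k : ℕ) :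
    braidY (fun i => σ (i + 1)) r k = braidY σ (r + 1) (k + 1) := by
  unfold braidY
  rw [show r + 1 + 1 - (k + 1) = r + 1 - k from by omega]
  apply congrArg List.prod
  apply List.map_congr_left
  intro i hi
  rw [List.mem_range] at hi
  simp only [braidRiseProd_shift, show r - i + 1 = r + 1 - i from by omega]

lemma braidY_succ (r k : ℕ) (hk : k ≤ r) :
    braidY σ r k = braidY σ r (k + 1) *
      (1 + (-1 : A) ^ (r - k + 1) * braidRiseProd σ k r * (σ r * σ r)) := by
  unfold braidY
  rw [show r + 1 - k = (r + 1 - (k + 1)) + 1 from by omega, List.range_succ, List.map_append,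
    List.prod_append]
  simp only [List.map_cons, List.map_nil, List.prod_cons, List.prod_nil, mul_one]
  rw [show r + 1 - (k + 1) = r - k from by omega, show r - (r - k) = k from by omega]

end BraidAux

lemma braid_step_abstract {A : Type*} [Ring A]
    (e Y1 Y2 Y3 Y1p Y2p f1 f2 fb1R fb2R fb1 fb2 dl W1 W2 c1 c2 c1p s1 Fb fall2 s2 : A)
    (he : e = 1 ∨ e = -1)
    (h1 : Y1 = Y2 * (1 + e * c1))
    (h2 : Y2 = Y3 * (1 - e * c2))
    (h3 : fb1R = 1 - fb2R * s1)
    (h4 : Y2 * fb2R = (e * (f2 * W2) + fb2) * Y3)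
    (h5 : s1 * Y3 = Y3 * s1)
    (h6 : s1 * c2 = c1)
    (d0 : c1 = dl * s2)
    (d2 : fb1R = Fb - e * fall2)
    (d3 : s2 * Fb = Fb * s2)
    (d4 : dl * Fb = fb2R * dl)
    (d5 : s2 * fall2 = W1)
    (h8 : Y2 * dl = dl * Y1p)
    (h9 : W2 * Y3 = Y2p * W2)
    (h10 : W1 * Y2 = Y1p * W1)
    (h11 : W2 * s1 = W1)
    (h12 : W2 * c1 = c1p * W1)
    (h13 : Y1p = Y2p * (1 - e * c1p))
    (h14 : f1 = f2 + e * dl)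
    (h15 : fb1 = 1 - fb2 * s1) :
    Y1 * fb1R = (-e * (f1 * W1) + fb1) * Y2 := by
  obtain rfl | rfl := he
  · linear_combination (norm := noncomm_ring)
      h1 * fb1R + Y2 * h3
      + Y2 * (d0 * fb1R) + Y2 * (dl * (s2 * d2)) + Y2 * (dl * d3) - Y2 * (dl * d5)
      + Y2 * (d4 * s2) - Y2 * (fb2R * d0)
      - h4 * s1 + h4 * c1
      - f2 * (h9 * s1) - f2 * (Y2p * h11)
      + f2 * (h9 * c1) + f2 * (Y2p * h12)
      - h8 * W1
      + h14 * (W1 * Y2) + f2 * h10 + dl * h10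
      - h15 * Y2 + fb2 * (s1 * h2)
      + fb2 * (h5 * (1 - c2)) - fb2 * (Y3 * h6)
      + f2 * (h13 * W1)
  · linear_combination (norm := noncomm_ring)
      h1 * fb1R + Y2 * h3
      - Y2 * (d0 * fb1R) - Y2 * (dl * (s2 * d2)) - Y2 * (dl * d3) - Y2 * (dl * d5)
      - Y2 * (d4 * s2) + Y2 * (fb2R * d0)
      - h4 * s1 - h4 * c1
      + f2 * (h9 * s1) + f2 * (Y2p * h11)
      + f2 * (h9 * c1) + f2 * (Y2p * h12)
      - h8 * W1
      - h14 * (W1 * Y2) - f2 * h10 + dl * h10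
      - h15 * Y2 + fb2 * (s1 * h2)
      + fb2 * (h5 * (1 + c2)) + fb2 * (Y3 * h6)
      - f2 * (h13 * W1)

lemma braid_aux {A : Type*} [Ring A] (n : ℕ) :
    ∀ (σ : ℕ → A),
      (∀ i, σ i * σ (i + 1) * σ i = σ (i + 1) * σ i * σ (i + 1)) →
      (∀ i j, i + 2 ≤ j → σ i * σ j = σ j * σ i) →
      braidY σ (n + 1) 1 * braidFbar σ (n + 1) 1 =
        ((-1 : A) ^ (n + 2) * (braidF σ 1 (n + 2) * braidFallProd σ 1 (n + 2)) +
          braidFbar σ (n + 2) 1) * braidY σ (n + 1) 2 := by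
  induction n with
  | zero =>
    intro σ hbraid hcomm
    have e1 : braidFbar σ 1 1 = 1 := braidFbar_of_le σ 1 1 le_rfl
    have e2 : braidFbar σ 2 1 = 1 - 1 * σ 1 := by
      rw [braidFbar_of_lt σ 2 1 (by omega), braidFbar_of_le σ 2 2 le_rfl]
    have e3 : braidF σ 1 2 = 1 - 1 * σ 1 := by
      rw [show (2:ℕ) = 1 + 1 from rfl, braidF_succ σ 1 1 le_rfl, braidF_of_le σ 1 1 le_rfl]
    have e4 : braidFallProd σ 1 2 = σ 1 := by
      rw [show (2:ℕ) = 1 + 1 from rfl, braidFallProd_cons σ 1 1 le_rfl,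
        braidFallProd_empty σ 1 1 le_rfl, mul_one]
    have e5 : braidY σ 1 2 = 1 := by
      unfold braidY
      norm_num
    have e7 : braidRiseProd σ 1 1 = 1 := braidRiseProd_empty σ 1 1 le_rfl
    have e6 : braidY σ 1 1 = 1 - σ 1 * σ 1 := by
      unfold braidY
      rw [show (1:ℕ) + 1 - 1 = 1 from rfl, List.range_succ, List.range_zero]
      simp only [List.nil_append, List.map_cons, List.map_nil, List.prod_cons, List.prod_nil,
        mul_one, Nat.sub_zero, e7, pow_one, zero_add]
      noncomm_ring
    rw [e1, e2, e3, e4, e5, e6, neg_one_sq]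
    noncomm_ring
  | succ n ih =>
    intro σ hbraid hcomm
    have IH := ih (fun i => σ (i + 1)) (fun i => hbraid (i + 1))
      (fun i j hj => hcomm (i + 1) (j + 1) (by omega))
    rw [braidY_shift, braidY_shift, braidFbar_shift, braidFbar_shift, braidF_shift,
      braidFallProd_shift] at IH
    rw [show n + 1 + 1 = n + 2 from by omega, show n + 2 + 1 = n + 3 from by omega,
      show (1:ℕ) + 1 = 2 from by norm_num, show (2:ℕ) + 1 = 3 from by norm_num] at IH
    -- power bookkeeping
    have epow1 : (-1 : A) ^ (n + 1) = -(-1 : A) ^ (n + 2) := by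
      rw [pow_succ (-1 : A) (n + 1), mul_neg_one, neg_neg]
    have epow2 : (-1 : A) ^ (n + 3) = -(-1 : A) ^ (n + 2) := by
      rw [pow_succ (-1 : A) (n + 2), mul_neg_one]
    -- h1
    have hY1 := braidY_succ σ (n + 2) 1 (by omega)
    rw [show n + 2 - 1 + 1 = n + 2 from by omega, show (1:ℕ) + 1 = 2 from by norm_num] at hY1
    have h1 : braidY σ (n + 2) 1 = braidY σ (n + 2) 2 *
        (1 + (-1 : A) ^ (n + 2) * (braidRiseProd σ 1 (n + 2) * (σ (n + 2) * σ (n + 2)))) := by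
      linear_combination (norm := noncomm_ring) hY1
    -- h2
    have hY2 := braidY_succ σ (n + 2) 2 (by omega)
    rw [show n + 2 - 2 + 1 = n + 1 from by omega, show (2:ℕ) + 1 = 3 from by norm_num,
      epow1] at hY2
    have h2 : braidY σ (n + 2) 2 = braidY σ (n + 2) 3 *
        (1 - (-1 : A) ^ (n + 2) * (braidRiseProd σ 2 (n + 2) * (σ (n + 2) * σ (n + 2)))) := by
      linear_combination (norm := noncomm_ring) hY2
    -- h3
    have h3 := braidFbar_of_lt σ (n + 2) 1 (by omega)
    rw [show (1:ℕ) + 1 = 2 from by norm_num] at h3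
    -- h5
    have h5 : σ 1 * braidY σ (n + 2) 3 = braidY σ (n + 2) 3 * σ 1 :=
      (commute_braidY σ (σ 1) (n + 2) 3 (fun j hj hj' => hcomm 1 j (by omega))).eq
    -- h6
    have hc0 := braidRiseProd_cons σ 1 (n + 2) (by omega)
    rw [show (1:ℕ) + 1 = 2 from by norm_num] at hc0
    have h6 : σ 1 * (braidRiseProd σ 2 (n + 2) * (σ (n + 2) * σ (n + 2))) =
        braidRiseProd σ 1 (n + 2) * (σ (n + 2) * σ (n + 2)) := by
      linear_combination (norm := noncomm_ring) - hc0 * (σ (n + 2) * σ (n + 2))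
    -- d0
    have hd1 := braidRiseProd_append σ 1 (n + 2) (by omega)
    rw [show n + 2 + 1 = n + 3 from by omega] at hd1
    have d0 : braidRiseProd σ 1 (n + 2) * (σ (n + 2) * σ (n + 2)) =
        braidRiseProd σ 1 (n + 3) * σ (n + 2) := by
      linear_combination (norm := noncomm_ring) - hd1 * σ (n + 2)
    -- d2
    have hd2 := braidFbar_split σ (n + 1) 1 (by omega)
    rw [show n + 1 + 1 = n + 2 from by omega, show n + 2 - 1 = n + 1 from by omega,
      epow1] at hd2
    have d2 : braidFbar σ (n + 2) 1 = braidFbar σ (n + 1) 1 -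
        (-1 : A) ^ (n + 2) * braidFallProd σ 1 (n + 2) := by
      linear_combination (norm := noncomm_ring) hd2
    -- d3
    have d3 : σ (n + 2) * braidFbar σ (n + 1) 1 = braidFbar σ (n + 1) 1 * σ (n + 2) :=
      (commute_braidFbar σ (σ (n + 2)) (n + 1) 1
        (fun j hj hj' => ((hcomm j (n + 2) (by omega)).symm : _))).eq
    -- d4
    have d4 := braidFbar_conj σ (braidRiseProd σ 1 (n + 3)) (n + 1) 1 (by omega)
      (fun j hj hj' => braidRiseProd_mul_sigma σ hbraid hcomm 1 (n + 3) j hj (by omega))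
    rw [show n + 1 + 1 = n + 2 from by omega, show (1:ℕ) + 1 = 2 from by norm_num] at d4
    -- d5
    have hd5 := braidFallProd_cons σ 1 (n + 2) (by omega)
    rw [show n + 2 + 1 = n + 3 from by omega] at hd5
    have d5 : σ (n + 2) * braidFallProd σ 1 (n + 2) = braidFallProd σ 1 (n + 3) := hd5.symm
    -- h8
    have h8 := braidY_conj_left σ (braidRiseProd σ 1 (n + 3)) (n + 1) 1
      (fun j hj hj' => (braidRiseProd_mul_sigma σ hbraid hcomm 1 (n + 3) j hj (by omega)).symm)
    rw [show n + 1 + 1 = n + 2 from by omega, show (1:ℕ) + 1 = 2 from by norm_num] at h8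
    -- h9
    have h9 := braidY_conj_right σ (braidFallProd σ 2 (n + 3)) (n + 1) 2
      (fun j hj hj' => braidFallProd_mul_sigma σ hbraid hcomm 2 (n + 3) j hj (by omega))
    rw [show n + 1 + 1 = n + 2 from by omega, show (2:ℕ) + 1 = 3 from by norm_num] at h9
    -- h10
    have h10 := braidY_conj_right σ (braidFallProd σ 1 (n + 3)) (n + 1) 1
      (fun j hj hj' => braidFallProd_mul_sigma σ hbraid hcomm 1 (n + 3) j hj (by omega))
    rw [show n + 1 + 1 = n + 2 from by omega, show (1:ℕ) + 1 = 2 from by norm_num] at h10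
    -- h11
    have hw := braidFallProd_append σ 1 (n + 3) (by omega)
    rw [show (1:ℕ) + 1 = 2 from by norm_num] at hw
    have h11 : braidFallProd σ 2 (n + 3) * σ 1 = braidFallProd σ 1 (n + 3) := hw.symm
    -- h12
    have g3' := braidRiseProd_conj_right σ (braidFallProd σ 1 (n + 3)) 1 (n + 1)
      (fun j hj hj' => braidFallProd_mul_sigma σ hbraid hcomm 1 (n + 3) j hj (by omega))
    rw [show n + 1 + 1 = n + 2 from by omega, show (1:ℕ) + 1 = 2 from by norm_num] at g3'
    have g4 : braidFallProd σ 1 (n + 3) * σ (n + 2) = σ (n + 1) * braidFallProd σ 1 (n + 3) := by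
      have := braidFallProd_mul_sigma σ hbraid hcomm 1 (n + 3) (n + 1) (by omega) (by omega)
      rwa [show n + 1 + 1 = n + 2 from by omega] at this
    have h12 : braidFallProd σ 2 (n + 3) * (braidRiseProd σ 1 (n + 2) * (σ (n + 2) * σ (n + 2))) =
        braidRiseProd σ 1 (n + 1) * (σ (n + 1) * σ (n + 1)) * braidFallProd σ 1 (n + 3) := by
      linear_combination (norm := noncomm_ring)
        braidFallProd σ 2 (n + 3) * (hc0 * (σ (n + 2) * σ (n + 2)))
        + h11 * (braidRiseProd σ 2 (n + 2) * (σ (n + 2) * σ (n + 2)))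
        + g3' * (σ (n + 2) * σ (n + 2))
        + braidRiseProd σ 1 (n + 1) * (g4 * σ (n + 2))
        + braidRiseProd σ 1 (n + 1) * (σ (n + 1) * g4)
    -- h13
    have hY13 := braidY_succ σ (n + 1) 1 (by omega)
    rw [show n + 1 - 1 + 1 = n + 1 from by omega, show (1:ℕ) + 1 = 2 from by norm_num,
      epow1] at hY13
    have h13 : braidY σ (n + 1) 1 = braidY σ (n + 1) 2 *
        (1 - (-1 : A) ^ (n + 2) * (braidRiseProd σ 1 (n + 1) * (σ (n + 1) * σ (n + 1)))) := by
      linear_combination (norm := noncomm_ring) hY13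
    -- h14
    have h14 := braidF_split σ 1 (n + 3) (by omega)
    rw [show (1:ℕ) + 1 = 2 from by norm_num, show n + 3 - 1 = n + 2 from by omega] at h14
    -- h15
    have h15 := braidFbar_of_lt σ (n + 3) 1 (by omega)
    rw [show (1:ℕ) + 1 = 2 from by norm_num] at h15
    -- conclude
    rw [show n + 1 + 1 = n + 2 from by omega, show n + 1 + 2 = n + 3 from by omega, epow2]
    have he : (-1 : A) ^ (n + 2) = 1 ∨ (-1 : A) ^ (n + 2) = -1 :=
      (Nat.even_or_odd (n + 2)).elim (fun h => Or.inl h.neg_one_pow) (fun h => Or.inr h.neg_one_pow)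
    exact braid_step_abstract _ _ _ _ _ _ _ _ _ _ _ _ _ _ _ _ _ _ _ _ _ _
      he h1 h2 h3 IH h5 h6 d0 d2 d3 d4 d5 h8 h9 h10 h11 h12 h13 h14 h15

/-- Key identity in the group algebra of the braid group:
`Y_{1→r+1} f̄_{1→r} = ((-1)^{r+1} f_{1→r+1} σ_r σ_{r-1} ⋯ σ_1 + f̄_{1→r+1}) Y_{2→r+1}`. -/
theorem braid_Y_fbar_identity {A : Type*} [Ring A] (σ : ℕ → A)
    (hbraid : ∀ i, σ i * σ (i + 1) * σ i = σ (i + 1) * σ i * σ (i + 1))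
    (hcomm : ∀ i j, i + 2 ≤ j → σ i * σ j = σ j * σ i)
    (r : ℕ) (hr : 1 ≤ r) :
    braidY σ r 1 * braidFbar σ r 1 =
      ((-1 : A) ^ (r + 1) * (braidF σ 1 (r + 1) * braidFallProd σ 1 (r + 1)) +
        braidFbar σ (r + 1) 1) * braidY σ r 2 := by
  obtain ⟨n, rfl⟩ : ∃ n, r = n + 1 := ⟨r - 1, by omega⟩
  rw [show n + 1 + 1 = n + 2 from by omega]
  exact braid_aux n σ hbraid hcomm
end

section
/- Associativity identity for quantum shuffles: x^{(n-m)}_n · x^{(m-k)}_m = x^{(n-k)}_n · (T_k x^{(n-m)}_{n-k} T_k^{-1}) for k < m < n, where T_k is the index-shift σ_i ↦ σ_{i+k} on the group algebra of the braid group. -/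
/-- The quantum shuffle elements `x^{(p)}_n`: `x^{(0)}_n = 1`, `x^{(n)}_n = 1` and
`x^{(n-m+1)}_{n+1} = x^{(n-m)}_n - (-1)^{n-m} x^{(n-m+1)}_n σ_n σ_{n-1} ⋯ σ_m`. -/
def braidShuffle {A : Type*} [Ring A] (σ : ℕ → A) : ℕ → ℕ → A
  | 0, _ => 1
  | _ + 1, 0 => 1
  | p + 1, n + 1 =>
      if n ≤ p then 1
      else braidShuffle σ p n -
        (-1 : A) ^ p * braidShuffle σ (p + 1) n * braidFallProd σ (n - p) (n + 1)
termination_by p n => (n, p)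

namespace BraidShuffleAux

variable {A : Type*} [Ring A] (σ : ℕ → A)

lemma fall_nil {a b : ℕ} (h : b ≤ a) : braidFallProd σ a b = 1 := by
  simp [braidFallProd, Nat.sub_eq_zero_of_le h]

lemma peel_bot {a b : ℕ} (h : a < b) :
    braidFallProd σ a b = braidFallProd σ (a + 1) b * σ a := by
  unfold braidFallProd
  have h1 : b - a = (b - (a + 1)) + 1 := by omega
  rw [h1, List.range_succ, List.map_append, List.prod_append]
  have h2 : b - 1 - (b - (a + 1)) = a := by omega
  simp [h2]

lemma peel_top {a b : ℕ} (h : a < b) :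
    braidFallProd σ a b = σ (b - 1) * braidFallProd σ a (b - 1) := by
  unfold braidFallProd
  have h1 : b - a = (b - 1 - a) + 1 := by omega
  rw [h1, List.range_succ_eq_map, List.map_cons, List.prod_cons, List.map_map]
  have h2 : List.map ((fun i => σ (b - 1 - i)) ∘ Nat.succ) (List.range (b - 1 - a)) =
      List.map (fun i => σ (b - 1 - 1 - i)) (List.range (b - 1 - a)) := by
    apply List.map_congr_left
    intro i _
    show σ (b - 1 - (i + 1)) = σ (b - 1 - 1 - i)
    congr 1
    omega
  rw [h2]
  norm_num

lemma fall_concat {k m n : ℕ} (h1 : k ≤ m) (h2 : m ≤ n) :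
    braidFallProd σ m n * braidFallProd σ k m = braidFallProd σ k n := by
  unfold braidFallProd
  have h3 : n - k = (n - m) + (m - k) := by omega
  rw [h3, List.range_add, List.map_append, List.prod_append, List.map_map]
  congr 2
  apply List.map_congr_left
  intro i hi
  rw [List.mem_range] at hi
  simp only [Function.comp]
  congr 1
  omega

lemma fall_shift (k a b : ℕ) :
    braidFallProd (fun i => σ (i + k)) a b = braidFallProd σ (a + k) (b + k) := by
  unfold braidFallProd
  have h : b + k - (a + k) = b - a := by omega
  rw [h]
  rcases le_or_gt b a with h' | h'
  · rw [Nat.sub_eq_zero_of_le h']; rfl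
  apply congrArg
  apply List.map_congr_left
  intro i hi
  rw [List.mem_range] at hi
  show σ (b - 1 - i + k) = σ (b + k - 1 - i)
  congr 1
  omega

lemma fall_comm_high (hcomm : ∀ i j, i + 2 ≤ j → σ i * σ j = σ j * σ i)
    {a b j : ℕ} (h : b + 1 ≤ j) : Commute (σ j) (braidFallProd σ a b) := by
  apply Commute.list_prod_right
  intro x hx
  simp only [List.mem_map, List.mem_range] at hx
  obtain ⟨i, hi, rfl⟩ := hx
  exact ((hcomm (b - 1 - i) j (by omega))).symm

lemma fall_comm_low (hcomm : ∀ i j, i + 2 ≤ j → σ i * σ j = σ j * σ i)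
    {a b j : ℕ} (h : j + 2 ≤ a) : Commute (σ j) (braidFallProd σ a b) := by
  apply Commute.list_prod_right
  intro x hx
  simp only [List.mem_map, List.mem_range] at hx
  obtain ⟨i, hi, rfl⟩ := hx
  rcases le_or_gt b a with h' | h'
  · omega
  · exact (hcomm j (b - 1 - i) (by omega))

lemma fall_mul_sigma (hbraid : ∀ i, σ i * σ (i + 1) * σ i = σ (i + 1) * σ i * σ (i + 1))
    (hcomm : ∀ i j, i + 2 ≤ j → σ i * σ j = σ j * σ i) :
    ∀ d a b i, i - a = d → a ≤ i → i + 2 ≤ b →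
      braidFallProd σ a b * σ (i + 1) = σ i * braidFallProd σ a b := by
  intro d
  induction d with
  | zero =>
    intro a b i hd ha hb
    have : i = a := by omega
    subst this
    rw [peel_bot σ (show i < b by omega), peel_bot σ (show i + 1 < b by omega)]
    have hc : Commute (σ i) (braidFallProd σ (i + 1 + 1) b) :=
      fall_comm_low σ hcomm (by omega)
    calc braidFallProd σ (i + 1 + 1) b * σ (i + 1) * σ i * σ (i + 1)
        = braidFallProd σ (i + 1 + 1) b * (σ (i + 1) * σ i * σ (i + 1)) := by
          rw [mul_assoc, mul_assoc, mul_assoc]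
      _ = braidFallProd σ (i + 1 + 1) b * (σ i * σ (i + 1) * σ i) := by rw [← hbraid i]
      _ = σ i * (braidFallProd σ (i + 1 + 1) b * σ (i + 1) * σ i) := by
          rw [← mul_assoc, ← mul_assoc, ← hc.eq]
          simp only [mul_assoc]
  | succ d ih =>
    intro a b i hd ha hb
    have ha' : a < i := by omega
    rw [peel_bot σ (show a < b by omega)]
    calc braidFallProd σ (a + 1) b * σ a * σ (i + 1)
        = braidFallProd σ (a + 1) b * σ (i + 1) * σ a := by
          rw [mul_assoc, mul_assoc, hcomm a (i + 1) (by omega)]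
      _ = σ i * braidFallProd σ (a + 1) b * σ a := by
          rw [ih (a + 1) b i (by omega) (by omega) hb]
      _ = σ i * (braidFallProd σ (a + 1) b * σ a) := by rw [mul_assoc]

lemma fall_mul_fall
    (hbraid : ∀ i, σ i * σ (i + 1) * σ i = σ (i + 1) * σ i * σ (i + 1))
    (hcomm : ∀ i j, i + 2 ≤ j → σ i * σ j = σ j * σ i) (k n : ℕ) :
    ∀ b a, k + 1 ≤ a → b ≤ n →
      braidFallProd σ k n * braidFallProd σ a b =
        braidFallProd σ (a - 1) (b - 1) * braidFallProd σ k n := by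
  intro b
  induction b with
  | zero =>
    intro a ha hb
    rw [show braidFallProd σ a 0 = 1 from fall_nil σ (by omega),
      show braidFallProd σ (a - 1) (0 - 1) = 1 from fall_nil σ (by omega), mul_one, one_mul]
  | succ b ih =>
    intro a ha hb
    rcases le_or_gt (b + 1) a with h' | h'
    · rw [show braidFallProd σ a (b + 1) = 1 from fall_nil σ h',
        show braidFallProd σ (a - 1) (b + 1 - 1) = 1 from fall_nil σ (by omega), mul_one, one_mul]
    · rw [peel_top σ h']
      simp only [Nat.add_sub_cancel]
      have hstep : braidFallProd σ k n * σ b = σ (b - 1) * braidFallProd σ k n := by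
        have h0 := fall_mul_sigma σ hbraid hcomm (b - 1 - k) k n (b - 1) rfl (by omega) (by omega)
        have hb2 : b - 1 + 1 = b := by omega
        rw [hb2] at h0
        exact h0
      calc braidFallProd σ k n * (σ b * braidFallProd σ a b)
          = braidFallProd σ k n * σ b * braidFallProd σ a b := by rw [mul_assoc]
        _ = σ (b - 1) * (braidFallProd σ k n * braidFallProd σ a b) := by
            rw [hstep, mul_assoc]
        _ = σ (b - 1) * (braidFallProd σ (a - 1) (b - 1) * braidFallProd σ k n) := by
            rw [ih a ha (by omega)]
        _ = braidFallProd σ (a - 1) b * braidFallProd σ k n := by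
            rw [← mul_assoc, ← peel_top σ (show a - 1 < b by omega)]

lemma shuffle_zero (n : ℕ) : braidShuffle σ 0 n = 1 := by rw [braidShuffle]

lemma shuffle_of_le {p n : ℕ} (h : n ≤ p) : braidShuffle σ p n = 1 := by
  match p, n with
  | 0, n => rw [braidShuffle]
  | p + 1, 0 => rw [braidShuffle]
  | p + 1, n + 1 => rw [braidShuffle]; rw [if_pos (by omega)]

lemma rec_succ {p n : ℕ} (h : p < n) :
    braidShuffle σ (p + 1) (n + 1) = braidShuffle σ p n -
      (-1 : A) ^ p * braidShuffle σ (p + 1) n * braidFallProd σ (n - p) (n + 1) := by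
  rw [braidShuffle]; rw [if_neg (by omega)]

lemma rec_sub {p q : ℕ} (h1 : 1 ≤ p) (h2 : p < q) :
    braidShuffle σ p q = braidShuffle σ (p - 1) (q - 1) -
      (-1 : A) ^ (p - 1) * braidShuffle σ p (q - 1) * braidFallProd σ (q - p) q := by
  obtain ⟨p', rfl⟩ : ∃ p', p = p' + 1 := ⟨p - 1, by omega⟩
  obtain ⟨q', rfl⟩ : ∃ q', q = q' + 1 := ⟨q - 1, by omega⟩
  simp only [Nat.add_sub_cancel]
  have : q' + 1 - (p' + 1) = q' - p' := by omega
  rw [this]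
  exact rec_succ σ (by omega)

lemma shuffle_comm (hcomm : ∀ i j, i + 2 ≤ j → σ i * σ j = σ j * σ i) :
    ∀ r p j, r + 1 ≤ j → Commute (σ j) (braidShuffle σ p r) := by
  intro r
  induction r with
  | zero =>
    intro p j _
    match p with
    | 0 => rw [shuffle_zero]; exact Commute.one_right _
    | p + 1 => rw [shuffle_of_le σ (by omega)]; exact Commute.one_right _
  | succ r ih =>
    intro p j hj
    match p with
    | 0 => rw [shuffle_zero]; exact Commute.one_right _
    | p + 1 =>
      rcases le_or_gt (r + 1) (p + 1) with h' | h'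
      · rw [shuffle_of_le σ h']; exact Commute.one_right _
      · rw [rec_succ σ (show p < r by omega)]
        apply Commute.sub_right
        · exact ih p j (by omega)
        · apply Commute.mul_right
          apply Commute.mul_right
          · exact (Commute.one_right (σ j)).neg_right.pow_right p
          · exact ih (p + 1) j (by omega)
          · exact fall_comm_high σ hcomm (by omega)

lemma fall_comm_shuffle (hcomm : ∀ i j, i + 2 ≤ j → σ i * σ j = σ j * σ i)
    {a b p r : ℕ} (h : r + 1 ≤ a) :
    braidFallProd σ a b * braidShuffle σ p r = braidShuffle σ p r * braidFallProd σ a b := by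
  have hc : Commute (braidFallProd σ a b) (braidShuffle σ p r) := by
    apply Commute.list_prod_left
    intro x hx
    simp only [List.mem_map, List.mem_range] at hx
    obtain ⟨i, hi, rfl⟩ := hx
    exact shuffle_comm σ hcomm r p (b - 1 - i) (by omega)
  exact hc.eq

lemma neg_one_pow_comm (e : ℕ) (x : A) : (-1 : A) ^ e * x = x * (-1 : A) ^ e := by
  rcases Nat.even_or_odd e with h | h
  · rw [h.neg_one_pow, one_mul, mul_one]
  · rw [h.neg_one_pow]
    simp

lemma fall_mul_shuffle
    (hbraid : ∀ i, σ i * σ (i + 1) * σ i = σ (i + 1) * σ i * σ (i + 1))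
    (hcomm : ∀ i j, i + 2 ≤ j → σ i * σ j = σ j * σ i) (k n : ℕ) :
    ∀ r p, r + k + 2 ≤ n →
      braidFallProd σ (k + 1) n * braidShuffle (fun i => σ (i + (k + 1))) p r =
        braidShuffle (fun i => σ (i + k)) p r * braidFallProd σ (k + 1) n := by
  intro r
  induction r with
  | zero =>
    intro p _
    match p with
    | 0 => rw [shuffle_zero, shuffle_zero, mul_one, one_mul]
    | p + 1 => rw [shuffle_of_le _ (by omega), shuffle_of_le _ (by omega), mul_one, one_mul]
  | succ r ih =>
    intro p hr
    match p with
    | 0 => rw [shuffle_zero, shuffle_zero, mul_one, one_mul]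
    | p + 1 =>
      rcases le_or_gt (r + 1) (p + 1) with h' | h'
      · rw [shuffle_of_le _ h', shuffle_of_le _ h', mul_one, one_mul]
      · have hp : p < r := by omega
        rw [rec_succ _ hp, rec_succ _ hp]
        have hC : braidFallProd σ (k + 1) n * braidFallProd (fun i => σ (i + (k + 1))) (r - p) (r + 1) =
            braidFallProd (fun i => σ (i + k)) (r - p) (r + 1) * braidFallProd σ (k + 1) n := by
          rw [fall_shift, fall_shift]
          have h1 := fall_mul_fall σ hbraid hcomm (k + 1) n (r + 1 + (k + 1)) (r - p + (k + 1))
            (by omega) (by omega)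
          have e1 : r - p + (k + 1) - 1 = r - p + k := by omega
          have e2 : r + 1 + (k + 1) - 1 = r + 1 + k := by omega
          rw [e1, e2] at h1
          exact h1
        calc braidFallProd σ (k + 1) n *
              (braidShuffle (fun i => σ (i + (k + 1))) p r -
                (-1 : A) ^ p * braidShuffle (fun i => σ (i + (k + 1))) (p + 1) r *
                  braidFallProd (fun i => σ (i + (k + 1))) (r - p) (r + 1))
            = braidFallProd σ (k + 1) n * braidShuffle (fun i => σ (i + (k + 1))) p r -
              (-1 : A) ^ p * (braidFallProd σ (k + 1) n *
                braidShuffle (fun i => σ (i + (k + 1))) (p + 1) r *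
                braidFallProd (fun i => σ (i + (k + 1))) (r - p) (r + 1)) := by
              rw [mul_sub]
              congr 1
              rw [← mul_assoc, ← mul_assoc, ← neg_one_pow_comm, mul_assoc, mul_assoc,
                ← mul_assoc (braidFallProd σ (k+1) n)]
          _ = braidShuffle (fun i => σ (i + k)) p r * braidFallProd σ (k + 1) n -
              (-1 : A) ^ p * (braidShuffle (fun i => σ (i + k)) (p + 1) r *
                (braidFallProd (fun i => σ (i + k)) (r - p) (r + 1) * braidFallProd σ (k + 1) n)) := by
              rw [ih p (by omega), ih (p + 1) (by omega), mul_assoc, hC, ← mul_assoc]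
          _ = (braidShuffle (fun i => σ (i + k)) p r -
                (-1 : A) ^ p * braidShuffle (fun i => σ (i + k)) (p + 1) r *
                  braidFallProd (fun i => σ (i + k)) (r - p) (r + 1)) * braidFallProd σ (k + 1) n := by
              rw [sub_mul]
              congr 1
              rw [mul_assoc, mul_assoc]

lemma fall_mul_shuffle'
    (hbraid : ∀ i, σ i * σ (i + 1) * σ i = σ (i + 1) * σ i * σ (i + 1))
    (hcomm : ∀ i j, i + 2 ≤ j → σ i * σ j = σ j * σ i) {k n r p : ℕ}
    (hk : 1 ≤ k) (h : r + k + 1 ≤ n) :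
    braidFallProd σ k n * braidShuffle (fun i => σ (i + k)) p r =
      braidShuffle (fun i => σ (i + (k - 1))) p r * braidFallProd σ k n := by
  obtain ⟨k', rfl⟩ : ∃ k', k = k' + 1 := ⟨k - 1, by omega⟩
  simp only [Nat.add_sub_cancel]
  exact fall_mul_shuffle σ hbraid hcomm k' n r p (by omega)

lemma braid_assemble
    (P1 P2 Q Q1 Q2 R1 R2 Fm Fk Fkm Fm' Y1 Y2 Ynk Z0 Z1 Z2 Xnm Xnk s t u : A)
    (hs : ∀ x : A, s * x = x * s) (ht : ∀ x : A, t * x = x * t)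
    (hstu : s * t = -u)
    (h1 : Xnm = P1 - s * P2 * Fm)
    (h2 : Q = Q1 - t * Q2 * Fkm)
    (h3 : Xnk = R1 - u * R2 * Fk)
    (h4 : Ynk = Y1 - s * Y2 * Fm)
    (h5 : Fm * Q1 = Q1 * Fm)
    (h6 : Fm * Q2 = Q2 * Fm)
    (h7 : Fm * Fkm = Fk)
    (h8 : P2 * Q1 = R1 * Y2)
    (h9 : P2 * Q2 = R2 * Z0)
    (h10 : P1 * Q = R1 * Y1)
    (h11 : Fk * Y1 = Z1 * Fk)
    (h12 : Fk * Y2 = Z2 * Fk)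
    (h13 : Fk * Fm = Fm' * Fk)
    (h14 : Z0 = Z1 - s * Z2 * Fm') :
    Xnm * Q = Xnk * Ynk := by
  have hFQ : Fm * Q = Q1 * Fm - t * Q2 * Fk := by
    calc Fm * Q = Fm * Q1 - Fm * (t * Q2 * Fkm) := by rw [h2, mul_sub]
      _ = Q1 * Fm - t * Q2 * Fk := by
          rw [h5]
          congr 1
          calc Fm * (t * Q2 * Fkm) = Fm * t * Q2 * Fkm := by
                rw [← mul_assoc, ← mul_assoc]
            _ = t * Fm * Q2 * Fkm := by rw [ht Fm]
            _ = t * Q2 * Fm * Fkm := by rw [mul_assoc t, h6, ← mul_assoc]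
            _ = t * Q2 * Fk := by rw [mul_assoc, h7]
  have key : Z0 * Fk = Fk * Ynk := by
    calc Z0 * Fk = Z1 * Fk - s * Z2 * Fm' * Fk := by rw [h14, sub_mul]
      _ = Fk * Y1 - Fk * (s * Y2 * Fm) := by
          rw [← h11]
          congr 1
          calc s * Z2 * Fm' * Fk = s * Z2 * (Fm' * Fk) := by rw [mul_assoc]
            _ = s * Z2 * (Fk * Fm) := by rw [h13]
            _ = s * (Z2 * Fk) * Fm := by noncomm_ring
            _ = s * (Fk * Y2) * Fm := by rw [h12]
            _ = Fk * (s * Y2 * Fm) := by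
                rw [← mul_assoc s Fk Y2, hs Fk]
                noncomm_ring
      _ = Fk * Ynk := by rw [← mul_sub, ← h4]
  calc Xnm * Q
      = P1 * Q - s * (P2 * (Fm * Q)) := by
        rw [h1, sub_mul, mul_assoc, mul_assoc]
    _ = P1 * Q - s * (P2 * Q1 * Fm) + s * t * (P2 * Q2 * Fk) := by
        rw [hFQ, mul_sub P2, mul_sub s, ← mul_assoc P2 (t * Q2) Fk, ← mul_assoc P2 t Q2,
          ← ht P2]
        noncomm_ring
    _ = R1 * Y1 - s * (R1 * Y2 * Fm) + s * t * (R2 * (Z0 * Fk)) := by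
        rw [h10, h8, h9, mul_assoc R2]
    _ = R1 * Y1 - s * (R1 * Y2 * Fm) - u * (R2 * (Fk * Ynk)) := by
        rw [key, hstu]
        rw [sub_eq_add_neg (R1 * Y1 - s * (R1 * Y2 * Fm)), neg_mul]
    _ = Xnk * Ynk := by
        have e0 : R1 * (s * Y2 * Fm) = s * (R1 * Y2 * Fm) := by
          rw [← mul_assoc R1 (s * Y2) Fm, ← mul_assoc R1 s Y2, ← hs R1]
          noncomm_ring
        have e1 : R1 * Ynk = R1 * Y1 - s * (R1 * Y2 * Fm) := by
          rw [h4, mul_sub, e0]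
        have e2 : u * R2 * Fk * Ynk = u * (R2 * (Fk * Ynk)) := by noncomm_ring
        rw [h3, sub_mul, e1, e2]

end BraidShuffleAux
open BraidShuffleAux in
lemma braid_shuffle_assoc_aux {A : Type*} [Ring A] (σ : ℕ → A)
    (hbraid : ∀ i, σ i * σ (i + 1) * σ i = σ (i + 1) * σ i * σ (i + 1))
    (hcomm : ∀ i j, i + 2 ≤ j → σ i * σ j = σ j * σ i) :
    ∀ N k m n, k ≤ m → m ≤ n → n ≤ N →
      braidShuffle σ (n - m) n * braidShuffle σ (m - k) m =
        braidShuffle σ (n - k) n * braidShuffle (fun i => σ (i + k)) (n - m) (n - k) := by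
  intro N
  induction N with
  | zero =>
    intro k m n h1 h2 h3
    have hn : n = 0 := by omega
    have hm : m = 0 := by omega
    have hk : k = 0 := by omega
    subst hn; subst hm; subst hk
    simp [shuffle_zero]
  | succ N ih =>
    intro k m n h1 h2 h3
    rcases le_or_gt n N with hn | hn
    · exact ih k m n h1 h2 hn
    -- boundary case k = 0
    rcases Nat.eq_zero_or_pos k with rfl | hk
    · rw [Nat.sub_zero, Nat.sub_zero, shuffle_of_le σ (le_refl m),
        shuffle_of_le σ (le_refl n), mul_one, one_mul]
      have hfun : (fun i => σ (i + 0)) = σ := by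
        funext i
        rw [Nat.add_zero]
      rw [hfun]
    -- boundary case k = m
    rcases eq_or_lt_of_le h1 with rfl | hkm
    · rw [Nat.sub_self, shuffle_zero, mul_one,
        shuffle_of_le (fun i => σ (i + k)) (le_refl (n - k)), mul_one]
    -- boundary case m = n
    rcases eq_or_lt_of_le h2 with rfl | hmn
    · rw [Nat.sub_self, shuffle_zero, one_mul, shuffle_zero, mul_one]
    -- main case: 1 ≤ k < m < n
    have H1 : braidShuffle σ (n - m) n = braidShuffle σ (n - m - 1) (n - 1) -
        (-1 : A) ^ (n - m - 1) * braidShuffle σ (n - m) (n - 1) * braidFallProd σ m n := by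
      have h := rec_sub σ (p := n - m) (q := n) (by omega) (by omega)
      rw [show n - (n - m) = m from by omega] at h
      exact h
    have H2 : braidShuffle σ (m - k) m = braidShuffle σ (m - k - 1) (m - 1) -
        (-1 : A) ^ (m - k - 1) * braidShuffle σ (m - k) (m - 1) * braidFallProd σ k m := by
      have h := rec_sub σ (p := m - k) (q := m) (by omega) (by omega)
      rw [show m - (m - k) = k from by omega] at h
      exact h
    have H3 : braidShuffle σ (n - k) n = braidShuffle σ (n - k - 1) (n - 1) -
        (-1 : A) ^ (n - k - 1) * braidShuffle σ (n - k) (n - 1) * braidFallProd σ k n := by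
      have h := rec_sub σ (p := n - k) (q := n) (by omega) (by omega)
      rw [show n - (n - k) = k from by omega] at h
      exact h
    have H4 : braidShuffle (fun i => σ (i + k)) (n - m) (n - k) =
        braidShuffle (fun i => σ (i + k)) (n - m - 1) (n - k - 1) -
          (-1 : A) ^ (n - m - 1) * braidShuffle (fun i => σ (i + k)) (n - m) (n - k - 1) *
            braidFallProd σ m n := by
      have h := rec_sub (fun i => σ (i + k)) (p := n - m) (q := n - k) (by omega) (by omega)
      rw [show n - k - (n - m) = m - k from by omega, fall_shift σ k (m - k) (n - k),
        show m - k + k = m from by omega, show n - k + k = n from by omega] at h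
      exact h
    have H5 : braidFallProd σ m n * braidShuffle σ (m - k - 1) (m - 1) =
        braidShuffle σ (m - k - 1) (m - 1) * braidFallProd σ m n :=
      fall_comm_shuffle σ hcomm (by omega)
    have H6 : braidFallProd σ m n * braidShuffle σ (m - k) (m - 1) =
        braidShuffle σ (m - k) (m - 1) * braidFallProd σ m n :=
      fall_comm_shuffle σ hcomm (by omega)
    have H7 : braidFallProd σ m n * braidFallProd σ k m = braidFallProd σ k n :=
      fall_concat σ (by omega) (by omega)
    have H8 : braidShuffle σ (n - m) (n - 1) * braidShuffle σ (m - k - 1) (m - 1) =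
        braidShuffle σ (n - k - 1) (n - 1) *
          braidShuffle (fun i => σ (i + k)) (n - m) (n - k - 1) := by
      have h := ih k (m - 1) (n - 1) (by omega) (by omega) (by omega)
      rw [show n - 1 - (m - 1) = n - m from by omega, show m - 1 - k = m - k - 1 from by omega,
        show n - 1 - k = n - k - 1 from by omega] at h
      exact h
    have H9 : braidShuffle σ (n - m) (n - 1) * braidShuffle σ (m - k) (m - 1) =
        braidShuffle σ (n - k) (n - 1) *
          braidShuffle (fun i => σ (i + (k - 1))) (n - m) (n - k) := by
      have h := ih (k - 1) (m - 1) (n - 1) (by omega) (by omega) (by omega)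
      rw [show n - 1 - (m - 1) = n - m from by omega,
        show m - 1 - (k - 1) = m - k from by omega,
        show n - 1 - (k - 1) = n - k from by omega] at h
      exact h
    have H10 : braidShuffle σ (n - m - 1) (n - 1) * braidShuffle σ (m - k) m =
        braidShuffle σ (n - k - 1) (n - 1) *
          braidShuffle (fun i => σ (i + k)) (n - m - 1) (n - k - 1) := by
      have h := ih k m (n - 1) (by omega) (by omega) (by omega)
      rw [show n - 1 - m = n - m - 1 from by omega,
        show n - 1 - k = n - k - 1 from by omega] at h
      exact h
    have H11 : braidFallProd σ k n * braidShuffle (fun i => σ (i + k)) (n - m - 1) (n - k - 1) =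
        braidShuffle (fun i => σ (i + (k - 1))) (n - m - 1) (n - k - 1) * braidFallProd σ k n :=
      fall_mul_shuffle' σ hbraid hcomm hk (by omega)
    have H12 : braidFallProd σ k n * braidShuffle (fun i => σ (i + k)) (n - m) (n - k - 1) =
        braidShuffle (fun i => σ (i + (k - 1))) (n - m) (n - k - 1) * braidFallProd σ k n :=
      fall_mul_shuffle' σ hbraid hcomm hk (by omega)
    have H13 : braidFallProd σ k n * braidFallProd σ m n =
        braidFallProd σ (m - 1) (n - 1) * braidFallProd σ k n :=
      fall_mul_fall σ hbraid hcomm k n n m (by omega) (le_refl n)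
    have H14 : braidShuffle (fun i => σ (i + (k - 1))) (n - m) (n - k) =
        braidShuffle (fun i => σ (i + (k - 1))) (n - m - 1) (n - k - 1) -
          (-1 : A) ^ (n - m - 1) * braidShuffle (fun i => σ (i + (k - 1))) (n - m) (n - k - 1) *
            braidFallProd σ (m - 1) (n - 1) := by
      have h := rec_sub (fun i => σ (i + (k - 1))) (p := n - m) (q := n - k) (by omega) (by omega)
      rw [show n - k - (n - m) = m - k from by omega, fall_shift σ (k - 1) (m - k) (n - k),
        show m - k + (k - 1) = m - 1 from by omega,
        show n - k + (k - 1) = n - 1 from by omega] at h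
      exact h
    have hstu : (-1 : A) ^ (n - m - 1) * (-1 : A) ^ (m - k - 1) = -(-1 : A) ^ (n - k - 1) := by
      rw [← pow_add, show n - m - 1 + (m - k - 1) = n - k - 2 from by omega,
        show n - k - 1 = (n - k - 2) + 1 from by omega, pow_succ]
      simp
    exact braid_assemble
      (braidShuffle σ (n - m - 1) (n - 1)) (braidShuffle σ (n - m) (n - 1))
      (braidShuffle σ (m - k) m)
      (braidShuffle σ (m - k - 1) (m - 1)) (braidShuffle σ (m - k) (m - 1))
      (braidShuffle σ (n - k - 1) (n - 1)) (braidShuffle σ (n - k) (n - 1))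
      (braidFallProd σ m n) (braidFallProd σ k n) (braidFallProd σ k m)
      (braidFallProd σ (m - 1) (n - 1))
      (braidShuffle (fun i => σ (i + k)) (n - m - 1) (n - k - 1))
      (braidShuffle (fun i => σ (i + k)) (n - m) (n - k - 1))
      (braidShuffle (fun i => σ (i + k)) (n - m) (n - k))
      (braidShuffle (fun i => σ (i + (k - 1))) (n - m) (n - k))
      (braidShuffle (fun i => σ (i + (k - 1))) (n - m - 1) (n - k - 1))
      (braidShuffle (fun i => σ (i + (k - 1))) (n - m) (n - k - 1))
      (braidShuffle σ (n - m) n) (braidShuffle σ (n - k) n)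
      ((-1 : A) ^ (n - m - 1)) ((-1 : A) ^ (m - k - 1)) ((-1 : A) ^ (n - k - 1))
      (neg_one_pow_comm (n - m - 1)) (neg_one_pow_comm (m - k - 1)) hstu
      H1 H2 H3 H4 H5 H6 H7 H8 H9 H10 H11 H12 H13 H14

/-- Associativity identity for quantum shuffles in the group algebra of the braid group:
`x^{(n-m)}_n x^{(m-k)}_m = x^{(n-k)}_n (T_k x^{(n-m)}_{n-k} T_k⁻¹)` for `k < m < n`,
where `T_k` is the index shift `σ_i ↦ σ_{i+k}` (so `T_k x^{(n-m)}_{n-k} T_k⁻¹` is the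
shuffle element built from the shifted generators `i ↦ σ_{i+k}`). -/
theorem braid_shuffle_associativity {A : Type*} [Ring A] (σ : ℕ → A)
    (hbraid : ∀ i, σ i * σ (i + 1) * σ i = σ (i + 1) * σ i * σ (i + 1))
    (hcomm : ∀ i j, i + 2 ≤ j → σ i * σ j = σ j * σ i)
    (k m n : ℕ) (hkm : k < m) (hmn : m < n) :
    braidShuffle σ (n - m) n * braidShuffle σ (m - k) m =
      braidShuffle σ (n - k) n * braidShuffle (fun i => σ (i + k)) (n - m) (n - k) :=
  braid_shuffle_assoc_aux σ hbraid hcomm n k m n (by omega) (by omega) (le_refl n)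
end

section
/- In the group algebra of the braid group, f_{1→m+1} · f̄_{1→m} = f̄_{1→m+1} · f_{2→m+1}, where f_{k→n} and f̄_{k→n} are the alternating sum elements. -/
/-- The descending products `σ_m σ_{m-1} ⋯ σ_k` (equal to `1` when `m < k`). -/
def braidTd {A : Type*} [Ring A] (σ : ℕ → A) (m k : ℕ) : A :=
  if m < k then 1 else braidTd σ m (k + 1) * σ k
termination_by m + 1 - k
decreasing_by omega

section Lemmas

variable {A : Type*} [Ring A] (σ : ℕ → A)

theorem braidTd_of_lt {m k : ℕ} (h : m < k) : braidTd σ m k = 1 := by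
  rw [braidTd, if_pos h]

theorem braidTd_of_le {m k : ℕ} (h : k ≤ m) :
    braidTd σ m k = braidTd σ m (k + 1) * σ k := by
  rw [braidTd, if_neg (by omega)]

theorem braidTd_left (k m : ℕ) (h : k ≤ m + 1) :
    braidTd σ (m + 1) k = σ (m + 1) * braidTd σ m k := by
  rcases Nat.lt_or_ge k (m + 1) with h' | h'
  · rw [braidTd_of_le σ (by omega : k ≤ m + 1), braidTd_of_le σ (by omega : k ≤ m),
      braidTd_left (k + 1) m (by omega), mul_assoc]
  · have hk : k = m + 1 := by omega
    subst hk
    rw [braidTd_of_le σ (le_refl (m + 1)), braidTd_of_lt σ (by omega : m + 1 < m + 2),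
      braidTd_of_lt σ (by omega : m < m + 1), one_mul, mul_one]
termination_by m + 1 - k

theorem braidTd_comm (hcomm : ∀ i j, i + 2 ≤ j → σ i * σ j = σ j * σ i)
    (i m k : ℕ) (h : m + 2 ≤ i) :
    σ i * braidTd σ m k = braidTd σ m k * σ i := by
  rcases Nat.lt_or_ge m k with h' | h'
  · rw [braidTd_of_lt σ h', one_mul, mul_one]
  · rw [braidTd_of_le σ h', ← mul_assoc,
      braidTd_comm hcomm i m (k + 1) h, mul_assoc,
      ← hcomm k i (by omega), ← mul_assoc]
termination_by m + 1 - k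

theorem braidTd_shift (hbraid : ∀ i, σ i * σ (i + 1) * σ i = σ (i + 1) * σ i * σ (i + 1))
    (hcomm : ∀ i j, i + 2 ≤ j → σ i * σ j = σ j * σ i)
    (j m : ℕ) (h1 : 1 ≤ j) (h2 : j + 1 ≤ m) :
    σ j * braidTd σ m 1 = braidTd σ m 1 * σ (j + 1) := by
  obtain ⟨m', rfl⟩ : ∃ m', m = m' + 1 := ⟨m - 1, by omega⟩
  rcases Nat.lt_or_ge (j + 1) (m' + 1) with h' | h'
  · -- j + 1 < m' + 1, so σ j commutes with σ (m'+1)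
    rw [braidTd_left σ 1 m' (by omega), ← mul_assoc, hcomm j (m' + 1) (by omega),
      mul_assoc, braidTd_shift hbraid hcomm j m' h1 (by omega), ← mul_assoc]
  · obtain rfl : j = m' := by omega
    obtain ⟨j', rfl⟩ : ∃ j', j = j' + 1 := ⟨j - 1, by omega⟩
    rw [braidTd_left σ 1 (j' + 1) (by omega), braidTd_left σ 1 j' (by omega)]
    simp only [show j' + 1 + 1 = j' + 2 from rfl]
    have hcm : σ (j' + 2) * braidTd σ j' 1 = braidTd σ j' 1 * σ (j' + 2) :=
      braidTd_comm σ hcomm (j' + 2) j' 1 (by omega)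
    have hbr : σ (j' + 1) * σ (j' + 2) * σ (j' + 1)
        = σ (j' + 2) * σ (j' + 1) * σ (j' + 2) := hbraid (j' + 1)
    calc σ (j' + 1) * (σ (j' + 2) * (σ (j' + 1) * braidTd σ j' 1))
        = (σ (j' + 1) * σ (j' + 2) * σ (j' + 1)) * braidTd σ j' 1 := by
          noncomm_ring
      _ = (σ (j' + 2) * σ (j' + 1) * σ (j' + 2)) * braidTd σ j' 1 := by
          rw [hbr]
      _ = σ (j' + 2) * σ (j' + 1) * (σ (j' + 2) * braidTd σ j' 1) := by
          rw [mul_assoc]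
      _ = σ (j' + 2) * (σ (j' + 1) * braidTd σ j' 1) * σ (j' + 2) := by
          rw [hcm]; noncomm_ring
termination_by m

theorem braidF_td_shift (hbraid : ∀ i, σ i * σ (i + 1) * σ i = σ (i + 1) * σ i * σ (i + 1))
    (hcomm : ∀ i j, i + 2 ≤ j → σ i * σ j = σ j * σ i)
    (n m : ℕ) (h : n ≤ m) :
    braidF σ 1 n * braidTd σ m 1 = braidTd σ m 1 * braidF σ 2 (n + 1) := by
  induction n with
  | zero =>
    show braidF σ 1 0 * _ = _ * braidF σ 2 1
    rw [show braidF σ 1 0 = 1 from rfl,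
      show braidF σ 2 1 = 1 by rw [braidF]; simp, one_mul, mul_one]
  | succ n ih =>
    rcases Nat.eq_zero_or_pos n with rfl | hn
    · rw [show braidF σ 1 1 = 1 by rw [braidF]; simp,
        show braidF σ 2 2 = 1 by rw [braidF]; simp, one_mul, mul_one]
    · rw [show braidF σ 1 (n + 1) = 1 - braidF σ 1 n * σ n by
          rw [braidF, if_neg (by omega)],
        show braidF σ 2 (n + 1 + 1) = 1 - braidF σ 2 (n + 1) * σ (n + 1) by
          rw [braidF, if_neg (by omega)]]
      have hsh : σ n * braidTd σ m 1 = braidTd σ m 1 * σ (n + 1) :=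
        braidTd_shift σ hbraid hcomm n m hn (by omega)
      calc (1 - braidF σ 1 n * σ n) * braidTd σ m 1
          = braidTd σ m 1 - braidF σ 1 n * (σ n * braidTd σ m 1) := by noncomm_ring
        _ = braidTd σ m 1 - braidF σ 1 n * braidTd σ m 1 * σ (n + 1) := by
            rw [hsh, mul_assoc]
        _ = braidTd σ m 1 - braidTd σ m 1 * braidF σ 2 (n + 1) * σ (n + 1) := by
            rw [ih (by omega)]
        _ = braidTd σ m 1 * (1 - braidF σ 2 (n + 1) * σ (n + 1)) := by noncomm_ring

theorem braidFbar_comm (hcomm : ∀ i j, i + 2 ≤ j → σ i * σ j = σ j * σ i)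
    (i m k : ℕ) (h : m + 1 ≤ i) :
    σ i * braidFbar σ m k = braidFbar σ m k * σ i := by
  rcases le_or_gt m k with h' | h'
  · rw [braidFbar, dif_pos h', one_mul, mul_one]
  · rw [braidFbar, dif_neg (by omega : ¬ m ≤ k)]
    calc σ i * (1 - braidFbar σ m (k + 1) * σ k)
        = σ i - σ i * braidFbar σ m (k + 1) * σ k := by noncomm_ring
      _ = σ i - braidFbar σ m (k + 1) * (σ i * σ k) := by
          rw [braidFbar_comm hcomm i m (k + 1) h, mul_assoc]
      _ = σ i - braidFbar σ m (k + 1) * (σ k * σ i) := by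
          rw [← hcomm k i (by omega)]
      _ = (1 - braidFbar σ m (k + 1) * σ k) * σ i := by noncomm_ring
termination_by m - k

theorem braidFbar_succ (m k : ℕ) (h : k ≤ m) :
    braidFbar σ (m + 1) k = braidFbar σ m k + (-1 : A) ^ (m + 1 - k) * braidTd σ m k := by
  rcases Nat.lt_or_ge k m with h' | h'
  · rw [show braidFbar σ (m + 1) k = 1 - braidFbar σ (m + 1) (k + 1) * σ k by
        rw [braidFbar]; rw [dif_neg (by omega)],
      show braidFbar σ m k = 1 - braidFbar σ m (k + 1) * σ k by
        rw [braidFbar]; rw [dif_neg (by omega)],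
      braidFbar_succ m (k + 1) (by omega),
      braidTd_of_le σ (by omega : k ≤ m),
      show m + 1 - k = (m - (k + 1)) + 1 + 1 by omega,
      show m + 1 - (k + 1) = (m - (k + 1)) + 1 by omega]
    generalize braidFbar σ m (k + 1) = X
    generalize braidTd σ m (k + 1) = Y
    rw [pow_succ ((-1 : A)) ((m - (k + 1)) + 1)]
    noncomm_ring
  · have hk : k = m := by omega
    subst hk
    rw [show braidFbar σ (k + 1) k = 1 - braidFbar σ (k + 1) (k + 1) * σ k by
        rw [braidFbar]; rw [dif_neg (by omega)],
      show braidFbar σ (k + 1) (k + 1) = 1 by rw [braidFbar]; rw [dif_pos (le_refl _)],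
      show braidFbar σ k k = 1 by rw [braidFbar]; rw [dif_pos (le_refl _)],
      braidTd_of_le σ (le_refl k), braidTd_of_lt σ (by omega : k < k + 1),
      show k + 1 - k = 1 by omega]
    noncomm_ring
termination_by m - k

end Lemmas

/-- In the group algebra of the braid group: `f_{1→m+1} f̄_{1→m} = f̄_{1→m+1} f_{2→m+1}`. -/
theorem braid_f_fbar_exchange {A : Type*} [Ring A] (σ : ℕ → A)
    (hbraid : ∀ i, σ i * σ (i + 1) * σ i = σ (i + 1) * σ i * σ (i + 1))
    (hcomm : ∀ i j, i + 2 ≤ j → σ i * σ j = σ j * σ i)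
    (m : ℕ) (hm : 1 ≤ m) :
    braidF σ 1 (m + 1) * braidFbar σ m 1 = braidFbar σ (m + 1) 1 * braidF σ 2 (m + 1) := by
  induction m, hm using Nat.le_induction with
  | base =>
    rw [show braidF σ 1 (1 + 1) = 1 - braidF σ 1 1 * σ 1 by rw [braidF]; simp,
      show braidF σ 1 1 = 1 by rw [braidF]; simp,
      show braidFbar σ 1 1 = 1 by rw [braidFbar]; simp,
      show braidFbar σ (1 + 1) 1 = 1 - braidFbar σ 2 2 * σ 1 by
        rw [braidFbar]; rw [dif_neg (by omega)],
      show braidFbar σ 2 2 = 1 by rw [braidFbar]; simp,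
      show braidF σ 2 (1 + 1) = 1 by rw [braidF]; simp]
  | succ m hm ih =>
    -- abbreviations
    have hF1 : braidF σ 1 (m + 1 + 1) = 1 - braidF σ 1 (m + 1) * σ (m + 1) := by
      rw [braidF]; rw [if_neg (by omega)]
    have hF2 : braidF σ 2 (m + 1 + 1) = 1 - braidF σ 2 (m + 1) * σ (m + 1) := by
      rw [braidF]; rw [if_neg (by omega)]
    have hFb1 : braidFbar σ (m + 1) 1
        = braidFbar σ m 1 + (-1 : A) ^ m * braidTd σ m 1 := by
      rw [braidFbar_succ σ m 1 hm]; norm_num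
    have hFb2 : braidFbar σ (m + 1 + 1) 1
        = braidFbar σ (m + 1) 1 + (-1 : A) ^ (m + 1) * braidTd σ (m + 1) 1 := by
      rw [braidFbar_succ σ (m + 1) 1 (by omega)]; norm_num
    have hcm : σ (m + 1) * braidFbar σ m 1 = braidFbar σ m 1 * σ (m + 1) :=
      braidFbar_comm σ hcomm (m + 1) m 1 (le_refl _)
    have htd : σ (m + 1) * braidTd σ m 1 = braidTd σ (m + 1) 1 :=
      (braidTd_left σ 1 m (by omega)).symm
    have hsh : braidF σ 1 (m + 1) * braidTd σ (m + 1) 1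
        = braidTd σ (m + 1) 1 * braidF σ 2 (m + 1 + 1) :=
      braidF_td_shift σ hbraid hcomm (m + 1) (m + 1) (le_refl _)
    -- commutation of the sign with everything
    have hcmul : ∀ (k : ℕ) (x y : A), x * ((-1 : A) ^ k * y) = (-1 : A) ^ k * (x * y) := by
      intro k x y
      rw [← mul_assoc, ← ((Commute.neg_one_left x).pow_left k).eq, mul_assoc]
    -- signed tails
    set B0 := braidFbar σ m 1 with hB0
    set B1 := braidFbar σ (m + 1) 1 with hB1
    set A1 := braidF σ 1 (m + 1) with hA1
    set A2 := braidF σ 2 (m + 1) with hA2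
    set T0 := braidTd σ m 1 with hT0
    set T1 := braidTd σ (m + 1) 1 with hT1
    set s := σ (m + 1) with hs
    -- rewrite the goal
    rw [hF1, hF2, hFb2]
    -- h3 : s * ((-1)^m * T0) = -((-1)^(m+1) * T1)
    have h3 : s * ((-1 : A) ^ m * T0) = -((-1 : A) ^ (m + 1) * T1) := by
      rw [hcmul m s T0, htd, pow_succ]
      noncomm_ring
    -- h4 : A1 * ((-1)^(m+1) * T1) = (-1)^(m+1) * (T1 * (1 - A2 * s))
    have h4 : A1 * ((-1 : A) ^ (m + 1) * T1)
        = (-1 : A) ^ (m + 1) * (T1 * (1 - A2 * s)) := by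
      rw [hcmul (m + 1) A1 T1, hsh, hF2]
    calc (1 - A1 * s) * B1
        = (1 - A1 * s) * (B0 + (-1 : A) ^ m * T0) := by rw [← hFb1]
      _ = B0 + (-1 : A) ^ m * T0 - A1 * (s * B0) - A1 * (s * ((-1 : A) ^ m * T0)) := by
          noncomm_ring
      _ = B0 + (-1 : A) ^ m * T0 - (A1 * B0) * s + A1 * ((-1 : A) ^ (m + 1) * T1) := by
          rw [hcm, h3]; noncomm_ring
      _ = B0 + (-1 : A) ^ m * T0 - (B1 * A2) * s
            + (-1 : A) ^ (m + 1) * (T1 * (1 - A2 * s)) := by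
          rw [ih, h4]
      _ = (B0 + (-1 : A) ^ m * T0) + (-1 : A) ^ (m + 1) * T1
            - (B0 + (-1 : A) ^ m * T0) * (A2 * s)
            - (-1 : A) ^ (m + 1) * T1 * (A2 * s) := by
          rw [← hFb1]; noncomm_ring
      _ = (B1 + (-1 : A) ^ (m + 1) * T1) * (1 - A2 * s) := by
          rw [← hFb1]; noncomm_ring
end

section
/- For a Lie superalgebra, the data (σ, C) with σ the super-permutation σ^{mk}_{ij} = (-1)^{(m)(k)} δ^m_j δ^k_i and C the structure constants of the superbracket satisfy the quantum Lie algebra axioms: (i) σ₁σ₂σ₁ = σ₂σ₁σ₂ (braid relation), (ii) C₁δ₃C₁ = σ₂C₁δ₃C₁ + C₂C₁ (quantum Jacobi identity), and (iii) C₁δ₃σ₁ = σ₂σ₁C₂. -/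
section SuperLie

variable (K : Type*) [Field K] {N : ℕ}

/-- Matrix of the super-permutation `σ : V ⊗ V → V ⊗ V`,
`σ(e_i ⊗ e_j) = (-1)^{(i)(j)} e_j ⊗ e_i` (`p i` is the parity of `e_i`),
i.e. `σ^{mk}_{ij} = (-1)^{(m)(k)} δ^m_j δ^k_i`. -/
def superSigma (p : Fin N → ℕ) : Matrix (Fin N × Fin N) (Fin N × Fin N) K := fun x y =>
  if x.1 = y.2 ∧ x.2 = y.1 then (-1 : K) ^ (p y.1 * p y.2) else 0

/-- Matrix of `σ₁ = σ ⊗ 1` on `V ⊗ V ⊗ V`. -/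
def superSigma1 (p : Fin N → ℕ) :
    Matrix (Fin N × Fin N × Fin N) (Fin N × Fin N × Fin N) K := fun x y =>
  if x.1 = y.2.1 ∧ x.2.1 = y.1 ∧ x.2.2 = y.2.2 then (-1 : K) ^ (p y.1 * p y.2.1) else 0

/-- Matrix of `σ₂ = 1 ⊗ σ` on `V ⊗ V ⊗ V`. -/
def superSigma2 (p : Fin N → ℕ) :
    Matrix (Fin N × Fin N × Fin N) (Fin N × Fin N × Fin N) K := fun x y =>
  if x.1 = y.1 ∧ x.2.1 = y.2.2 ∧ x.2.2 = y.2.1 then (-1 : K) ^ (p y.2.1 * p y.2.2) else 0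

/-- Matrix of `C : V ⊗ V → V`, `e_i ⊗ e_j ↦ C^a_{ij} e_a` (here `C i j a = C^a_{ij}`). -/
def superC1 (C : Fin N → Fin N → Fin N → K) : Matrix (Fin N) (Fin N × Fin N) K :=
  fun a y => C y.1 y.2 a

/-- Matrix of `C₁δ₃ : V ⊗ V ⊗ V → V ⊗ V`, `e_i ⊗ e_j ⊗ e_u ↦ Σ_a C^a_{ij} e_a ⊗ e_u`
(the bracket on the first two factors). -/
def superC1d3 (C : Fin N → Fin N → Fin N → K) :
    Matrix (Fin N × Fin N) (Fin N × Fin N × Fin N) K := fun x y =>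
  if x.2 = y.2.2 then C y.1 y.2.1 x.1 else 0

/-- Matrix of `C₂ : V ⊗ V ⊗ V → V ⊗ V`, `e_i ⊗ e_j ⊗ e_u ↦ Σ_b C^b_{ju} e_i ⊗ e_b`
(the bracket on the last two factors). -/
def superC2 (C : Fin N → Fin N → Fin N → K) :
    Matrix (Fin N × Fin N) (Fin N × Fin N × Fin N) K := fun x y =>
  if x.1 = y.1 then C y.2.1 y.2.2 x.2 else 0

end SuperLie

lemma npc {K : Type*} [Field K] {a b : ℕ} (h : a % 2 = b % 2) :
    (-1 : K) ^ a = (-1 : K) ^ b := by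
  rw [← Nat.div_add_mod a 2, ← Nat.div_add_mod b 2, pow_add, pow_add, pow_mul, pow_mul, h]
  norm_num

lemma sigR1 {K : Type*} [Field K] {N : ℕ} (p : Fin N → ℕ)
    (g : Fin N × Fin N × Fin N → K) (y : Fin N × Fin N × Fin N) :
    ∑ a, g a * superSigma1 K p a y
      = (-1 : K) ^ (p y.1 * p y.2.1) * g (y.2.1, y.1, y.2.2) := by
  rw [Finset.sum_eq_single (y.2.1, y.1, y.2.2)]
  · simp [superSigma1, mul_comm]
  · rintro ⟨b1, b2, b3⟩ _ hb
    simp only [superSigma1]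
    rw [if_neg, mul_zero]
    rintro ⟨h1, h2, h3⟩
    subst h1 h2 h3
    exact hb rfl
  · simp

lemma sigR2 {K : Type*} [Field K] {N : ℕ} (p : Fin N → ℕ)
    (g : Fin N × Fin N × Fin N → K) (y : Fin N × Fin N × Fin N) :
    ∑ a, g a * superSigma2 K p a y
      = (-1 : K) ^ (p y.2.1 * p y.2.2) * g (y.1, y.2.2, y.2.1) := by
  rw [Finset.sum_eq_single (y.1, y.2.2, y.2.1)]
  · simp [superSigma2, mul_comm]
  · rintro ⟨b1, b2, b3⟩ _ hb
    simp only [superSigma2]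
    rw [if_neg, mul_zero]
    rintro ⟨h1, h2, h3⟩
    subst h1 h2 h3
    exact hb rfl
  · simp

lemma sigL {K : Type*} [Field K] {N : ℕ} (p : Fin N → ℕ)
    (g : Fin N × Fin N → K) (x : Fin N × Fin N) :
    ∑ a, superSigma K p x a * g a = (-1 : K) ^ (p x.2 * p x.1) * g (x.2, x.1) := by
  rw [Finset.sum_eq_single (x.2, x.1)]
  · simp [superSigma]
  · rintro ⟨b1, b2⟩ _ hb
    simp only [superSigma]
    rw [if_neg, zero_mul]
    rintro ⟨h1, h2⟩
    subst h1 h2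
    exact hb rfl
  · simp


/-- For a Lie superalgebra with homogeneous structure constants `C^k_{ij}` (parities
`p i ∈ {0,1}`, homogeneity, super-antisymmetry, super-Jacobi identity), the
super-permutation `σ` and `C` satisfy the quantum Lie algebra axioms:
(i) the braid relation `σ₁σ₂σ₁ = σ₂σ₁σ₂`;
(ii) the quantum Jacobi identity `C₁δ₃C₁ = σ₂C₁δ₃C₁ + C₂C₁`;
(iii) `C₁δ₃σ₁ = σ₂σ₁C₂`.
(Operator words are read left to right — the leftmost factor acts first — so a word
`X Y` has matrix `Mat(Y) * Mat(X)`.) -/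
theorem superLie_quantumLie_axioms {K : Type*} [Field K] {N : ℕ}
    (p : Fin N → ℕ) (hp : ∀ i, p i ≤ 1)
    (C : Fin N → Fin N → Fin N → K)
    (hhom : ∀ i j k, (p i + p j) % 2 ≠ p k % 2 → C i j k = 0)
    (hanti : ∀ i j k, C j i k = -((-1 : K) ^ (p i * p j)) * C i j k)
    (hjacobi : ∀ i j u l, ∑ m, C j u m * C i m l =
      ∑ m, C i j m * C m u l + (-1 : K) ^ (p i * p j) * ∑ m, C i u m * C j m l) :
    superSigma1 K p * superSigma2 K p * superSigma1 K p =
        superSigma2 K p * superSigma1 K p * superSigma2 K p ∧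
    superC1 K C * superC1d3 K C =
        superC1 K C * superC1d3 K C * superSigma2 K p + superC1 K C * superC2 K C ∧
    superSigma K p * superC1d3 K C =
        superC2 K C * superSigma1 K p * superSigma2 K p := by
  refine ⟨?_, ?_, ?_⟩
  · ext ⟨x1, x2, x3⟩ ⟨y1, y2, y3⟩
    simp only [Matrix.mul_apply]
    rw [sigR1, sigR2, sigR2, sigR1]
    simp only [superSigma1, superSigma2]
    split_ifs <;> first | ring | simp_all | tauto
  · ext l ⟨i, j, u⟩
    simp only [Matrix.add_apply, Matrix.mul_apply]
    rw [sigR2]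
    simp only [superC1, superC1d3, superC2, Fintype.sum_prod_type,
      mul_ite, mul_zero, Finset.sum_ite_eq, Finset.sum_ite_eq', Finset.mem_univ, if_true]
    rw [Finset.sum_comm]
    simp only [Finset.sum_ite_eq, Finset.sum_ite_eq', Finset.mem_univ, if_true]
    have hsq : (-1:K) ^ (p j * p u) * (-1:K) ^ (p j * p u) = 1 := by
      rw [← pow_add]
      exact Even.neg_one_pow ⟨_, rfl⟩
    have key : ∀ m, (-1:K) ^ (p j * p u) * (C m j l * C i u m)
        = -((-1:K) ^ (p i * p j)) * (C i u m * C j m l) := by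
      intro m
      rw [hanti j m l]
      by_cases hc : C i u m = 0
      · simp [hc]
      · have hm : (p i + p u) % 2 = p m % 2 := by
          by_contra h; exact hc (hhom i u m h)
        have hpow : (-1 : K) ^ (p j * p m) = (-1 : K) ^ (p i * p j + p j * p u) := by
          apply npc
          rw [Nat.mul_mod, ← hm, ← Nat.mul_mod, mul_add, Nat.mul_comm (p j) (p i)]
        rw [hpow, pow_add]
        linear_combination (-((-1:K) ^ (p i * p j)) * C j m l * C i u m) * hsq
    have e3 : (-1:K) ^ (p j * p u) * ∑ m, C m j l * C i u m
        = ∑ m, -((-1:K) ^ (p i * p j)) * (C i u m * C j m l) := by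
      rw [Finset.mul_sum]
      exact Finset.sum_congr rfl fun m _ => key m
    have e1 : ∑ m, C m u l * C i j m = ∑ m, C i j m * C m u l :=
      Finset.sum_congr rfl fun m _ => mul_comm _ _
    have e2 : ∑ m, C i m l * C j u m = ∑ m, C j u m * C i m l :=
      Finset.sum_congr rfl fun m _ => mul_comm _ _
    have e4 : ∑ m, -((-1:K) ^ (p i * p j)) * (C i u m * C j m l)
        = -((-1:K) ^ (p i * p j) * ∑ m, C i u m * C j m l) := by
      rw [← neg_mul, Finset.mul_sum]
    rw [e3, e1, e2, e4]
    linear_combination -(hjacobi i j u l)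
  · ext ⟨x1, x2⟩ ⟨y1, y2, y3⟩
    simp only [Matrix.mul_apply]
    rw [sigL, sigR2, sigR1]
    simp only [superC1d3, superC2]
    split_ifs with h
    · subst h
      by_cases hc : C y1 y2 x2 = 0
      · simp [hc]
      · have hm : (p y1 + p y2) % 2 = p x2 % 2 := by
          by_contra h; exact hc (hhom y1 y2 x2 h)
        have hpow : (-1 : K) ^ (p x2 * p x1) = (-1 : K) ^ (p y2 * p x1 + p y1 * p x1) := by
          apply npc
          rw [Nat.mul_mod, ← hm, ← Nat.mul_mod, add_mul, Nat.add_comm]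
        rw [hpow, pow_add]
        ring
    · ring
end

section
/- For the super-permutation braid matrix σ of a Lie superalgebra and homogeneous structure constants C, the compatibility relation (σ₂C₁δ₃ + C₂)σ₁ = σ₁(σ₂C₁δ₃ + C₂) holds, and moreover it follows from the relation C₁δ₃σ₁ = σ₂σ₁C₂ together with σ² = 1. -/
lemma sigma2_sq {K : Type*} [Field K] {N : ℕ} (p : Fin N → ℕ) :
    superSigma2 K p * superSigma2 K p = 1 := by
  ext x z
  rw [Matrix.mul_apply, Finset.sum_eq_single (x.1, x.2.2, x.2.1)]
  · simp only [superSigma2, Matrix.one_apply]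
    by_cases h : x = z
    · subst h
      simp only [and_self, if_true, eq_self_iff_true]
      rw [Nat.mul_comm (p x.2.2), ← pow_add, ← two_mul, pow_mul]
      norm_num
    · have h1 : ¬ (x.1 = z.1 ∧ x.2.2 = z.2.2 ∧ x.2.1 = z.2.1) :=
        fun ⟨a, b, c⟩ => h (Prod.ext a (Prod.ext c b))
      rw [if_neg h1, mul_zero, if_neg h]
  · intro y _ hy
    have : ¬ (x.1 = y.1 ∧ x.2.1 = y.2.2 ∧ x.2.2 = y.2.1) := by
      intro ⟨h1, h2, h3⟩; exact hy (Prod.ext h1.symm (Prod.ext h3.symm h2.symm))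
    simp [superSigma2, this]
  · intro h; exact absurd (Finset.mem_univ _) h

/-- For the super-permutation braid matrix `σ` of a Lie superalgebra and homogeneous
structure constants `C`, the compatibility relation
`(σ₂C₁δ₃ + C₂)σ₁ = σ₁(σ₂C₁δ₃ + C₂)` holds; moreover it follows from the relation
`C₁δ₃σ₁ = σ₂σ₁C₂` together with `σ² = 1` (which are the hypotheses assumed here).
(Operator words are read left to right — the leftmost factor acts first — so a word
`X Y` has matrix `Mat(Y) * Mat(X)`; in particular the operator `σ₂C₁δ₃ + C₂` has
matrix `E = superC1d3 * superSigma2 + superC2`.) -/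
theorem superLie_compatibility {K : Type*} [Field K] {N : ℕ}
    (p : Fin N → ℕ) (hp : ∀ i, p i ≤ 1)
    (C : Fin N → Fin N → Fin N → K)
    (hhom : ∀ i j k, (p i + p j) % 2 ≠ p k % 2 → C i j k = 0)
    (hsq2 : superSigma K p * superSigma K p = 1)
    (hsq3 : superSigma1 K p * superSigma1 K p = 1)
    (hrel3 : superSigma K p * superC1d3 K C =
      superC2 K C * superSigma1 K p * superSigma2 K p) :
    superSigma K p * (superC1d3 K C * superSigma2 K p + superC2 K C) =
      (superC1d3 K C * superSigma2 K p + superC2 K C) * superSigma1 K p := by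
  have hS2 := sigma2_sq (K := K) p
  have hA' : superC1d3 K C * superSigma2 K p =
      superSigma K p * (superC2 K C * superSigma1 K p) := by
    calc superC1d3 K C * superSigma2 K p
        = (superSigma K p * superSigma K p) * (superC1d3 K C * superSigma2 K p) := by
          rw [hsq2, Matrix.one_mul]
      _ = superSigma K p * ((superSigma K p * superC1d3 K C) * superSigma2 K p) := by
          rw [Matrix.mul_assoc, Matrix.mul_assoc]
      _ = superSigma K p * (superC2 K C * superSigma1 K p * superSigma2 K p *
            superSigma2 K p) := by rw [hrel3]
      _ = superSigma K p * (superC2 K C * superSigma1 K p) := by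
          rw [Matrix.mul_assoc, hS2, Matrix.mul_one]
  rw [Matrix.mul_add, Matrix.add_mul, hA', ← Matrix.mul_assoc, hsq2, Matrix.one_mul, Matrix.mul_assoc, Matrix.mul_assoc, hsq3,
    Matrix.mul_one, add_comm]
end
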